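/- arXiv:2604.23607 — 8 statements merged into one kernel-verified Lean document; each statement's English description precedes it below -/
import Mathlib

section
/- Let d ≥ 2 and let ℓ = {x,y} be a non-critical chord for σ_d (i.e. σ_d(x) ≠ σ_d(y)). Then there exist d chords ℓ_1, …, ℓ_d with ℓ_1 = ℓ, all having the same σ_d-image as ℓ, such that the ℓ_i are pairwise disjoint (no shared endpoints and no two linked). -/
noncomputable section

/-- The circle `ℝ/ℤ`. -/
abbrev S1 := AddCircle (1 : ℝ)

/-- The `d`-tupling map `σ_d(t) = d·t` on the circle. -/
def sig (d : ℕ) (x : S1) : S1 := d • x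

/-- `StrictArc a b c` : `b` lies strictly inside the positively oriented open arc from `a` to `c`. -/
def StrictArc (a b c : S1) : Prop :=
  ∃ x y z : ℝ, (x : S1) = a ∧ (y : S1) = b ∧ (z : S1) = c ∧ x < y ∧ y < z ∧ z < x + 1

/-- Two chords (given by ordered pairs of endpoints) are linked (cross): their endpoints
alternate on the circle. -/
def Linked (p q : S1 × S1) : Prop :=
  (StrictArc p.1 q.1 p.2 ∧ StrictArc p.2 q.2 p.1) ∨ (StrictArc p.1 q.2 p.2 ∧ StrictArc p.2 q.1 p.1)

/-- Two chords are disjoint: they share no endpoint and are not linked. -/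
def ChordDisj (p q : S1 × S1) : Prop :=
  p.1 ≠ q.1 ∧ p.1 ≠ q.2 ∧ p.2 ≠ q.1 ∧ p.2 ≠ q.2 ∧ ¬ Linked p q

/-- The σ_d-image of a chord, as the (unordered) set of images of the endpoints. -/
def chordIm (d : ℕ) (p : S1 × S1) : Set S1 := {sig d p.1, sig d p.2}
/-- A full sibling collection: `d` pairwise disjoint chords with a common σ_d-image. -/
def SiblingCollection (d : ℕ) (f : Fin d → S1 × S1) : Prop :=
  (∀ i j, i ≠ j → ChordDisj (f i) (f j)) ∧ ∀ i j, chordIm d (f i) = chordIm d (f j)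

/-- A family of chords has the sibling property: every non-critical chord of the family
is a member of a full sibling collection contained in the family. -/
def HasSiblings (d : ℕ) (W : Set (S1 × S1)) : Prop :=
  ∀ p ∈ W, sig d p.1 ≠ sig d p.2 →
    ∃ f : Fin d → S1 × S1, (∀ i, f i ∈ W) ∧ (∃ i, f i = p) ∧ SiblingCollection d f

/-- A σ_d-invariant web: a family of chords with the sibling property, containing all
degenerate chords, closed under σ_d-images, and with every chord having a preimage chord. -/
def IsInvWeb (d : ℕ) (W : Set (S1 × S1)) : Prop :=
  HasSiblings d W ∧
  (∀ x : S1, (x, x) ∈ W) ∧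
  (∀ p ∈ W, (sig d p.1, sig d p.2) ∈ W) ∧
  (∀ p ∈ W, ∃ q ∈ W, ({sig d q.1, sig d q.2} : Set S1) = {p.1, p.2})

namespace NCC

lemma coe_eq_coe {a b : ℝ} : (a : S1) = (b : S1) ↔ ∃ n : ℤ, a = b + n := by
  constructor
  · intro h
    obtain ⟨k, hk⟩ := AddSubgroup.mem_zmultiples_iff.mp (QuotientAddGroup.eq_iff_sub_mem.mp h)
    refine ⟨k, ?_⟩
    have : (k : ℝ) = a - b := by simpa using hk
    linarith
  · rintro ⟨n, rfl⟩
    refine (QuotientAddGroup.eq_iff_sub_mem.mpr ?_)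
    refine AddSubgroup.mem_zmultiples_iff.mpr ⟨n, by simp⟩

def cyc3 (a b c : ℝ) : Prop := (a < b ∧ b < c) ∨ (b < c ∧ c < a) ∨ (c < a ∧ a < b)

lemma strictArc_cyc {u a b c : ℝ} (ha : a ∈ Set.Ico u (u+1)) (hb : b ∈ Set.Ico u (u+1))
    (hc : c ∈ Set.Ico u (u+1)) (h : StrictArc (a : ℝ) (b : ℝ) (c : ℝ)) : cyc3 a b c := by
  obtain ⟨X, Y, Z, hX, hY, hZ, h1, h2, h3⟩ := h
  obtain ⟨m, rfl⟩ := coe_eq_coe.mp hX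
  obtain ⟨n, rfl⟩ := coe_eq_coe.mp hY
  obtain ⟨k, rfl⟩ := coe_eq_coe.mp hZ
  obtain ⟨ha1, ha2⟩ := ha; obtain ⟨hb1, hb2⟩ := hb; obtain ⟨hc1, hc2⟩ := hc
  have hnm : n = m ∨ n = m + 1 := by
    have l1 : (m : ℝ) - 1 < n := by linarith
    have l2 : (n : ℝ) < m + 2 := by linarith
    have l1' : m - 1 < n := by exact_mod_cast l1
    have l2' : n < m + 2 := by exact_mod_cast l2
    omega
  have hkm : k = m ∨ k = m + 1 := by
    have l1 : (m : ℝ) - 1 < k := by linarith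
    have l2 : (k : ℝ) < m + 2 := by linarith
    have l1' : m - 1 < k := by exact_mod_cast l1
    have l2' : k < m + 2 := by exact_mod_cast l2
    omega
  unfold cyc3
  rcases hnm with rfl | rfl <;> rcases hkm with h' | h' <;> subst h' <;>
    [skip; skip; skip; skip] <;> push_cast at h1 h2 h3
  · exact Or.inl ⟨by linarith, by linarith⟩
  · exact Or.inr (Or.inr ⟨by linarith, by linarith⟩)
  · exfalso; linarith
  · exact Or.inr (Or.inl ⟨by linarith, by linarith⟩)

lemma not_linked {u a b c e : ℝ} (ha : a ∈ Set.Ico u (u+1)) (hb : b ∈ Set.Ico u (u+1))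
    (hc : c ∈ Set.Ico u (u+1)) (he : e ∈ Set.Ico u (u+1))
    (h : (a<c ∧ a<e ∧ b<c ∧ b<e) ∨ (c<a ∧ c<b ∧ e<a ∧ e<b) ∨
         (a<c ∧ c<b ∧ a<e ∧ e<b) ∨ (b<c ∧ c<a ∧ b<e ∧ e<a) ∨
         (c<a ∧ a<e ∧ c<b ∧ b<e) ∨ (e<a ∧ a<c ∧ e<b ∧ b<c)) :
    ¬ Linked ((a : S1), (b : S1)) ((c : S1), (e : S1)) := by
  rintro (⟨h1, h2⟩ | ⟨h1, h2⟩)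
  · have c1 := strictArc_cyc ha hc hb h1
    have c2 := strictArc_cyc hb he ha h2
    unfold cyc3 at c1 c2
    rcases c1 with ⟨p1,p2⟩|⟨p1,p2⟩|⟨p1,p2⟩ <;> rcases c2 with ⟨q1,q2⟩|⟨q1,q2⟩|⟨q1,q2⟩ <;>
      rcases h with ⟨r1,r2,r3,r4⟩|⟨r1,r2,r3,r4⟩|⟨r1,r2,r3,r4⟩|⟨r1,r2,r3,r4⟩|⟨r1,r2,r3,r4⟩|⟨r1,r2,r3,r4⟩ <;>
      linarith
  · have c1 := strictArc_cyc ha he hb h1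
    have c2 := strictArc_cyc hb hc ha h2
    unfold cyc3 at c1 c2
    rcases c1 with ⟨p1,p2⟩|⟨p1,p2⟩|⟨p1,p2⟩ <;> rcases c2 with ⟨q1,q2⟩|⟨q1,q2⟩|⟨q1,q2⟩ <;>
      rcases h with ⟨r1,r2,r3,r4⟩|⟨r1,r2,r3,r4⟩|⟨r1,r2,r3,r4⟩|⟨r1,r2,r3,r4⟩|⟨r1,r2,r3,r4⟩|⟨r1,r2,r3,r4⟩ <;>
      linarith

end NCC

set_option maxHeartbeats 1000000 in
/-- Every non-critical chord `ℓ = {x,y}` (i.e. `σ_d x ≠ σ_d y`) can be included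
in a full sibling collection: there are `d` pairwise disjoint chords, one of which is `ℓ`,
all having the same σ_d-image as `ℓ`. -/


theorem noncritical_chord_in_sibling_collection (d : ℕ) (hd : 2 ≤ d) (x y : S1)
    (hnc : sig d x ≠ sig d y) :
    ∃ f : Fin d → S1 × S1, (∃ i, f i = (x, y)) ∧ SiblingCollection d f := by
  have hd0 : (0:ℝ) < d := by
    have : 0 < d := by omega
    exact_mod_cast this
  have hdne : (d:ℝ) ≠ 0 := ne_of_gt hd0
  obtain ⟨u, hu⟩ := QuotientAddGroup.mk_surjective x
  obtain ⟨w0, hw0⟩ := QuotientAddGroup.mk_surjective y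
  set w : ℝ := toIcoMod (zero_lt_one) u w0 with hwdef
  have hwIco : w ∈ Set.Ico u (u+1) := toIcoMod_mem_Ico zero_lt_one u w0
  have hwy : (w : S1) = y := by
    rw [← hw0]
    apply NCC.coe_eq_coe.mpr
    refine ⟨-(toIcoDiv zero_lt_one u w0), ?_⟩
    have hh := self_sub_toIcoDiv_zsmul zero_lt_one u w0
    rw [zsmul_eq_mul] at hh
    push_cast
    rw [hwdef, ← hh]
    ring
  have hsig : ∀ r : ℝ, sig d ((r : ℝ) : S1) = (((d:ℝ) * r : ℝ) : S1) := by
    intro r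
    show (d : ℕ) • ((r:ℝ) : S1) = _
    rw [← AddCircle.coe_nsmul]
    norm_num [nsmul_eq_mul]
  have hxy : x ≠ y := by
    intro h; exact hnc (by rw [h])
  have hwu : u < w := by
    rcases lt_or_eq_of_le hwIco.1 with h | h
    · exact h
    · exact absurd (by rw [← hu, ← hwy, h]) hxy
  set t : ℝ := w - u with htdef
  have ht0 : 0 < t := by rw [htdef]; linarith
  have ht1 : t < 1 := by
    have := hwIco.2; rw [htdef]; linarith
  set J : ℕ := (⌊(d:ℝ) * t⌋).toNat with hJdef
  have hF0 : (0:ℤ) ≤ ⌊(d:ℝ) * t⌋ := Int.floor_nonneg.mpr (by positivity)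
  have hJcast : (J : ℝ) = ((⌊(d:ℝ) * t⌋ : ℤ) : ℝ) := by
    have h' : (J : ℤ) = ⌊(d:ℝ) * t⌋ := by rw [hJdef]; exact Int.toNat_of_nonneg hF0
    exact_mod_cast h'
  have hJle : (J : ℝ) ≤ (d:ℝ) * t := by rw [hJcast]; exact Int.floor_le _
  have hJgt : (d:ℝ) * t < (J : ℝ) + 1 := by rw [hJcast]; exact Int.lt_floor_add_one _
  have hJd : J < d := by
    have : (J : ℝ) < d := by nlinarith
    exact_mod_cast this
  set s : ℝ := t - (J:ℝ)/(d:ℝ) with hsdef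
  have hds : (d:ℝ) * s = (d:ℝ) * t - J := by
    rw [hsdef]; field_simp
  have hs1 : s < 1/(d:ℝ) := by
    rw [lt_div_iff₀ hd0]; nlinarith
  have hs0' : 0 ≤ s := by
    have : (J:ℝ)/(d:ℝ) ≤ t := by rw [div_le_iff₀ hd0]; nlinarith
    rw [hsdef]; linarith
  have hsigx : sig d x = (((d:ℝ) * u : ℝ) : S1) := by rw [← hu, hsig]
  have hsigy : sig d y = (((d:ℝ) * u + (d:ℝ) * t : ℝ) : S1) := by
    rw [← hwy, hsig]
    congr 1
    rw [htdef]; ring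
  have hs0 : 0 < s := by
    rcases lt_or_eq_of_le hs0' with h | h
    · exact h
    · exfalso
      apply hnc
      rw [hsigx, hsigy]
      apply NCC.coe_eq_coe.mpr
      refine ⟨-(J:ℤ), ?_⟩
      have hJt : (d:ℝ) * t = J := by rw [← h] at hds; linarith
      push_cast
      linarith
  clear_value w t J s
  set M : ℕ → ℕ := fun i => if i = 0 then J else if i ≤ J then i - 1 else i with hMdef
  set A : ℕ → ℝ := fun i => u + (i:ℝ)/(d:ℝ) with hAdef
  set B : ℕ → ℝ := fun i => u + (M i : ℝ)/(d:ℝ) + s with hBdef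
  clear_value M A B
  have hM0 : M 0 = J := by simp [hMdef]
  have hMmid : ∀ i : ℕ, i ≠ 0 → i ≤ J → M i = i - 1 := by
    intro i h1 h2; simp only [hMdef]; rw [if_neg h1, if_pos h2]
  have hMhigh : ∀ i : ℕ, J < i → M i = i := by
    intro i h; simp only [hMdef]; rw [if_neg (by omega), if_neg (by omega)]
  have hMlt : ∀ i : ℕ, i < d → M i < d := by
    intro i hi; simp only [hMdef]; split_ifs <;> omega
  have hMinj : ∀ m n : ℕ, m < d → n < d → m ≠ n → M m ≠ M n := by
    intro m n hm hn hmn; simp only [hMdef]; split_ifs <;> omega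
  have hAIco : ∀ i : ℕ, i < d → A i ∈ Set.Ico u (u+1) := by
    intro i hi
    constructor
    · simp only [hAdef]
      have : (0:ℝ) ≤ (i:ℝ)/(d:ℝ) := by positivity
      linarith
    · simp only [hAdef]
      have : (i:ℝ)/(d:ℝ) < 1 := by
        rw [div_lt_one hd0]; exact_mod_cast hi
      linarith
  have hBIco : ∀ i : ℕ, i < d → B i ∈ Set.Ico u (u+1) := by
    intro i hi
    have hMi := hMlt i hi
    constructor
    · simp only [hBdef]
      have h0 : (0:ℝ) ≤ (M i:ℝ)/(d:ℝ) := by positivity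
      linarith [hs0]
    · simp only [hBdef]
      have h1 : ((M i : ℝ) + 1)/(d:ℝ) ≤ 1 := by
        rw [div_le_one hd0]
        have : (M i : ℝ) + 1 ≤ d := by exact_mod_cast hMi
        linarith
      have h2 : (M i : ℝ)/(d:ℝ) + 1/(d:ℝ) = ((M i:ℝ)+1)/(d:ℝ) := by ring
      linarith
  have hmono : ∀ m n : ℕ, m ≤ n → (m:ℝ)/(d:ℝ) ≤ (n:ℝ)/(d:ℝ) := by
    intro m n h
    exact (div_le_div_iff_of_pos_right hd0).mpr (by exact_mod_cast h)
  have hsmono : ∀ m n : ℕ, m < n → (m:ℝ)/(d:ℝ) < (n:ℝ)/(d:ℝ) := by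
    intro m n h
    exact (div_lt_div_iff_of_pos_right hd0).mpr (by exact_mod_cast h)
  have hstep : ∀ m n : ℕ, m < n → (m:ℝ)/(d:ℝ) + s < (n:ℝ)/(d:ℝ) := by
    intro m n h
    have h1 : ((m:ℝ)+1)/(d:ℝ) ≤ (n:ℝ)/(d:ℝ) := by
      apply (div_le_div_iff_of_pos_right hd0).mpr
      have : (m:ℝ) + 1 ≤ n := by exact_mod_cast h
      linarith
    have h2 : (m:ℝ)/(d:ℝ) + 1/(d:ℝ) = ((m:ℝ)+1)/(d:ℝ) := by ring
    linarith
  -- basic inequality producers for chords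
  have iAA : ∀ m n : ℕ, m < n → A m < A n := by
    intro m n h; simp only [hAdef]; have h2 := hsmono m n h; linarith [h2]
  have iAB : ∀ m n : ℕ, m ≤ M n → A m < B n := by
    intro m n h; simp only [hAdef, hBdef]; have := hmono m (M n) h; linarith [hs0]
  have iBA : ∀ m n : ℕ, M m < n → B m < A n := by
    intro m n h; simp only [hAdef, hBdef]; have h2 := hstep (M m) n h; linarith [h2]
  have iBB : ∀ m n : ℕ, M m < M n → B m < B n := by
    intro m n h; simp only [hBdef]; have h2 := hsmono (M m) (M n) h; linarith [h2]
  -- distinctness of endpoints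
  have hne1 : ∀ m n : ℕ, m < d → n < d → m ≠ n → ((A m : ℝ) : S1) ≠ ((A n : ℝ) : S1) := by
    intro m n hm hn hmn h
    rw [AddCircle.coe_eq_coe_iff_of_mem_Ico (hAIco m hm) (hAIco n hn)] at h
    simp only [hAdef] at h
    have h2 : (m:ℝ)/(d:ℝ) = (n:ℝ)/(d:ℝ) := by linarith
    exact hmn (by field_simp at h2; exact_mod_cast h2)
  have hne3 : ∀ m n : ℕ, m < d → n < d → m ≠ n → ((B m : ℝ) : S1) ≠ ((B n : ℝ) : S1) := by
    intro m n hm hn hmn h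
    rw [AddCircle.coe_eq_coe_iff_of_mem_Ico (hBIco m hm) (hBIco n hn)] at h
    simp only [hBdef] at h
    have h2 : (M m:ℝ)/(d:ℝ) = (M n:ℝ)/(d:ℝ) := by linarith
    exact hMinj m n hm hn hmn (by field_simp at h2; exact_mod_cast h2)
  have hne2 : ∀ m n : ℕ, m < d → n < d → ((A m : ℝ) : S1) ≠ ((B n : ℝ) : S1) := by
    intro m n hm hn h
    rw [AddCircle.coe_eq_coe_iff_of_mem_Ico (hAIco m hm) (hBIco n hn)] at h
    simp only [hAdef, hBdef] at h
    have h2 : (d:ℝ) * s = (m:ℝ) - (M n:ℝ) := by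
      have h1 : (m:ℝ)/(d:ℝ) = (M n:ℝ)/(d:ℝ) + s := by linarith
      field_simp at h1
      nlinarith [h1]
    have hb1 : (0:ℝ) < (m:ℝ) - (M n:ℝ) := by nlinarith
    have hb2 : (m:ℝ) - (M n:ℝ) < 1 := by nlinarith
    have hb1' : (M n : ℤ) < (m : ℤ) := by
      have : ((M n:ℤ):ℝ) < ((m:ℤ):ℝ) := by push_cast; linarith
      exact_mod_cast this
    have hb2' : (m : ℤ) < (M n : ℤ) + 1 := by
      have : ((m:ℤ):ℝ) < ((M n:ℤ):ℝ) + 1 := by push_cast; linarith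
      exact_mod_cast this
    omega
  -- separation: the six-way disjunction needed for unlinkedness
  have hsep : ∀ m n : ℕ, m < d → n < d → m ≠ n →
      ((A m < A n ∧ A m < B n ∧ B m < A n ∧ B m < B n) ∨
       (A n < A m ∧ A n < B m ∧ B n < A m ∧ B n < B m) ∨
       (A m < A n ∧ A n < B m ∧ A m < B n ∧ B n < B m) ∨
       (B m < A n ∧ A n < A m ∧ B m < B n ∧ B n < A m) ∨
       (A n < A m ∧ A m < B n ∧ A n < B m ∧ B m < B n) ∨
       (B n < A m ∧ A m < A n ∧ B n < B m ∧ B m < A n)) := by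
    intro m n hm hn hmn
    rcases Nat.eq_zero_or_pos m with rfl | hmpos
    · -- m = 0, chord (u, u + J/d + s)
      have hn0 : n ≠ 0 := fun h => hmn h.symm
      rcases le_or_gt n J with hnJ | hnJ
      · -- n ∈ [1, J] : chord n nested inside chord 0 : D3
        have hMn := hMmid n hn0 hnJ
        refine Or.inr (Or.inr (Or.inl ⟨?_, ?_, ?_, ?_⟩))
        · exact iAA 0 n (by omega)
        · exact iAB n 0 (by rw [hM0]; omega)
        · exact iAB 0 n (by omega)
        · exact iBB n 0 (by rw [hMn, hM0]; omega)
      · -- n > J : chord n to the right of chord 0 : D1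
        have hMn := hMhigh n hnJ
        refine Or.inl ⟨?_, ?_, ?_, ?_⟩
        · exact iAA 0 n (by omega)
        · exact iAB 0 n (by omega)
        · exact iBA 0 n (by rw [hM0]; omega)
        · exact iBB 0 n (by rw [hM0, hMn]; omega)
    · rcases Nat.eq_zero_or_pos n with rfl | hnpos
      · rcases le_or_gt m J with hmJ | hmJ
        · -- m ∈ [1,J], n = 0 : chord m nested inside chord 0 : D5
          have hMm := hMmid m (by omega) hmJ
          refine Or.inr (Or.inr (Or.inr (Or.inr (Or.inl ⟨?_, ?_, ?_, ?_⟩))))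
          · exact iAA 0 m (by omega)
          · exact iAB m 0 (by rw [hM0]; omega)
          · exact iAB 0 m (by omega)
          · exact iBB m 0 (by rw [hMm, hM0]; omega)
        · -- m > J, n = 0 : chord 0 to the left of chord m : D2
          have hMm := hMhigh m hmJ
          refine Or.inr (Or.inl ⟨?_, ?_, ?_, ?_⟩)
          · exact iAA 0 m (by omega)
          · exact iAB 0 m (by omega)
          · exact iBA 0 m (by rw [hM0]; omega)
          · exact iBB 0 m (by rw [hM0, hMm]; omega)
      · -- both m, n ≥ 1
        rcases le_or_gt m J with hmJ | hmJ <;> rcases le_or_gt n J with hnJ | hnJ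
        · -- both in [1,J]
          have hMm := hMmid m (by omega) hmJ
          have hMn := hMmid n (by omega) hnJ
          rcases lt_or_gt_of_ne hmn with hlt | hgt
          · refine Or.inl ⟨?_, ?_, ?_, ?_⟩
            · exact iAA m n hlt
            · exact iAB m n (by rw [hMn]; omega)
            · exact iBA m n (by rw [hMm]; omega)
            · exact iBB m n (by rw [hMm, hMn]; omega)
          · refine Or.inr (Or.inl ⟨?_, ?_, ?_, ?_⟩)
            · exact iAA n m hgt
            · exact iAB n m (by rw [hMm]; omega)
            · exact iBA n m (by rw [hMn]; omega)
            · exact iBB n m (by rw [hMn, hMm]; omega)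
        · -- m ∈ [1,J], n > J : chord m left of chord n : D1
          have hMm := hMmid m (by omega) hmJ
          have hMn := hMhigh n hnJ
          refine Or.inl ⟨?_, ?_, ?_, ?_⟩
          · exact iAA m n (by omega)
          · exact iAB m n (by rw [hMn]; omega)
          · exact iBA m n (by rw [hMm]; omega)
          · exact iBB m n (by rw [hMm, hMn]; omega)
        · -- m > J, n ∈ [1,J] : chord n left of chord m : D2
          have hMm := hMhigh m hmJ
          have hMn := hMmid n (by omega) hnJ
          refine Or.inr (Or.inl ⟨?_, ?_, ?_, ?_⟩)
          · exact iAA n m (by omega)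
          · exact iAB n m (by rw [hMm]; omega)
          · exact iBA n m (by rw [hMn]; omega)
          · exact iBB n m (by rw [hMn, hMm]; omega)
        · -- both > J
          have hMm := hMhigh m hmJ
          have hMn := hMhigh n hnJ
          rcases lt_or_gt_of_ne hmn with hlt | hgt
          · refine Or.inl ⟨?_, ?_, ?_, ?_⟩
            · exact iAA m n hlt
            · exact iAB m n (by rw [hMn]; omega)
            · exact iBA m n (by rw [hMm]; omega)
            · exact iBB m n (by rw [hMm, hMn]; omega)
          · refine Or.inr (Or.inl ⟨?_, ?_, ?_, ?_⟩)
            · exact iAA n m hgt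
            · exact iAB n m (by rw [hMm]; omega)
            · exact iBA n m (by rw [hMn]; omega)
            · exact iBB n m (by rw [hMn, hMm]; omega)
  -- the sibling collection
  refine ⟨fun i => (((A (i:ℕ) : ℝ) : S1), ((B (i:ℕ) : ℝ) : S1)), ⟨⟨0, by omega⟩, ?_⟩, ?_, ?_⟩
  · -- f 0 = (x, y)
    have e1 : ((A 0 : ℝ) : S1) = x := by
      rw [← hu]
      congr 1
      simp [hAdef]
    have e2 : ((B 0 : ℝ) : S1) = y := by
      rw [← hwy]
      congr 1
      simp only [hBdef, hM0]
      rw [hsdef, htdef]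
      ring
    simp only [e1, e2]
  · -- pairwise disjoint
    intro i j hij
    have hij' : (i : ℕ) ≠ (j : ℕ) := fun h => hij (Fin.ext h)
    refine ⟨hne1 _ _ i.isLt j.isLt hij', hne2 _ _ i.isLt j.isLt,
      (hne2 _ _ j.isLt i.isLt).symm, hne3 _ _ i.isLt j.isLt hij', ?_⟩
    exact NCC.not_linked (hAIco _ i.isLt) (hBIco _ i.isLt) (hAIco _ j.isLt) (hBIco _ j.isLt)
      (hsep _ _ i.isLt j.isLt hij')
  · -- common image
    have key : ∀ i : ℕ, i < d →
        ({sig d ((A i : ℝ) : S1), sig d ((B i : ℝ) : S1)} : Set S1) =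
        ({(((d:ℝ) * u : ℝ) : S1), (((d:ℝ) * u + (d:ℝ) * s : ℝ) : S1)} : Set S1) := by
      intro i hi
      have e1 : sig d ((A i : ℝ) : S1) = (((d:ℝ) * u : ℝ) : S1) := by
        rw [hsig]
        apply NCC.coe_eq_coe.mpr
        refine ⟨(i:ℤ), ?_⟩
        simp only [hAdef]
        push_cast
        field_simp
      have e2 : sig d ((B i : ℝ) : S1) = (((d:ℝ) * u + (d:ℝ) * s : ℝ) : S1) := by
        rw [hsig]
        apply NCC.coe_eq_coe.mpr
        refine ⟨(M i : ℤ), ?_⟩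
        simp only [hBdef]
        push_cast
        field_simp
        ring
      rw [e1, e2]
    intro i j
    show ({sig d ((A (i:ℕ) : ℝ) : S1), sig d ((B (i:ℕ) : ℝ) : S1)} : Set S1) =
      ({sig d ((A (j:ℕ) : ℝ) : S1), sig d ((B (j:ℕ) : ℝ) : S1)} : Set S1)
    rw [key _ i.isLt, key _ j.isLt]
end
end

section
/- Let d ≥ 2. Suppose for each n, {ℓ_1^{(n)}, …, ℓ_d^{(n)}} is a full sibling collection for σ_d (d pairwise disjoint chords with a common non-degenerate image), and suppose ℓ_i^{(n)} → ℓ_i as n → ∞ (convergence of endpoints) for each i, with the common image of the limit chords being non-degenerate. Then ℓ_1, …, ℓ_d are pairwise disjoint chords with a common image; i.e., the limit is again a full sibling collection. -/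
noncomputable section

/-!
Non-linking passes to the limit because linking is an open condition (strict inequalities
between lifts to `ℝ`), and equality of image chords because it is a closed one. What remains
is that endpoints of distinct siblings cannot collide in the limit. Two nearby distinct points
never have the same `σ_d`-image, since their difference would be one of the finitely many
nonzero `d`-torsion points. So if two sibling endpoints converge to the same point, the image of
the first is eventually matched with the *other* endpoint of the second chord, and in the limit
the image chord becomes degenerate.
-/

open Filter Topology

lemma continuous_sig (d : ℕ) : Continuous (sig d) := continuous_const_smul d

lemma isOpen_setOf_strictArc : IsOpen {x : S1 × S1 × S1 | StrictArc x.1 x.2.1 x.2.2} := by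
  have hmap : IsOpenMap (Prod.map ((↑) : ℝ → S1) (Prod.map ((↑) : ℝ → S1) ((↑) : ℝ → S1))) :=
    QuotientAddGroup.isOpenMap_coe.prodMap
      (QuotientAddGroup.isOpenMap_coe.prodMap QuotientAddGroup.isOpenMap_coe)
  have hlifts : IsOpen {x : ℝ × ℝ × ℝ | x.1 < x.2.1 ∧ x.2.1 < x.2.2 ∧ x.2.2 < x.1 + 1} :=
    (isOpen_lt (g := fun x : ℝ × ℝ × ℝ => x.2.1) (by fun_prop) (by fun_prop)).inter
      ((isOpen_lt (g := fun x : ℝ × ℝ × ℝ => x.2.2) (by fun_prop) (by fun_prop)).inter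
        (isOpen_lt (g := fun x : ℝ × ℝ × ℝ => x.1 + 1) (by fun_prop) (by fun_prop)))
  convert hmap _ hlifts using 1
  ext ⟨a, b, c⟩
  simp only [StrictArc, Set.mem_ofPred_eq, Set.mem_image, Prod.exists, Prod.map_apply,
    Prod.mk.injEq]
  constructor
  · rintro ⟨x, y, z, hx, hy, hz, hxyz⟩
    exact ⟨x, y, z, hxyz, hx, hy, hz⟩
  · rintro ⟨x, y, z, hxyz, hx, hy, hz⟩
    exact ⟨x, y, z, hx, hy, hz, hxyz⟩

lemma isOpen_setOf_linked : IsOpen {x : (S1 × S1) × (S1 × S1) | Linked x.1 x.2} := by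
  have harc : ∀ f : (S1 × S1) × (S1 × S1) → S1 × S1 × S1, Continuous f →
      IsOpen {x | StrictArc (f x).1 (f x).2.1 (f x).2.2} :=
    fun f hf => isOpen_setOf_strictArc.preimage hf
  exact ((harc (fun x => (x.1.1, x.2.1, x.1.2)) (by fun_prop)).inter
      (harc (fun x => (x.1.2, x.2.2, x.1.1)) (by fun_prop))).union
    ((harc (fun x => (x.1.1, x.2.2, x.1.2)) (by fun_prop)).inter
      (harc (fun x => (x.1.2, x.2.1, x.1.1)) (by fun_prop)))

lemma isClosed_setOf_chordIm_eq (d : ℕ) :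
    IsClosed {x : (S1 × S1) × (S1 × S1) | chordIm d x.1 = chordIm d x.2} := by
  have hs := continuous_sig d
  simp only [chordIm, Set.pair_eq_pair_iff, Set.ofPred_or, Set.ofPred_and]
  exact ((isClosed_eq (by fun_prop) (by fun_prop)).inter
      (isClosed_eq (by fun_prop) (by fun_prop))).union
    ((isClosed_eq (by fun_prop) (by fun_prop)).inter (isClosed_eq (by fun_prop) (by fun_prop)))

lemma chordIm_swap (d : ℕ) (p : S1 × S1) : chordIm d p.swap = chordIm d p := Set.pair_comm _ _

lemma eventually_eq_of_nsmul_eq {G α : Type*} [AddCommGroup G] [TopologicalSpace G]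
    [IsTopologicalAddGroup G] [T1Space G] {d : ℕ} (hfin : {t : G | d • t = 0}.Finite)
    {l : Filter α} {a b : α → G} {x : G} (ha : Tendsto a l (𝓝 x))
    (hb : Tendsto b l (𝓝 x)) :
    ∀ᶠ n in l, d • a n = d • b n → a n = b n := by
  have hsmall : ∀ᶠ t in 𝓝 (0 : G), t ∉ {t : G | d • t = 0} \ {0} :=
    (hfin.subset Set.sdiff_subset).isClosed.isOpen_compl.mem_nhds fun h => h.2 rfl
  have hab : Tendsto (fun n => a n - b n) l (𝓝 0) := by simpa using ha.sub hb
  filter_upwards [hab.eventually hsmall] with n hn heq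
  by_contra hne
  exact hn ⟨by simp [smul_sub, heq], sub_ne_zero.mpr hne⟩

section Limits

variable {α : Type*} {l : Filter α} {d : ℕ} {p q : α → S1 × S1} {P Q : S1 × S1}

lemma chordIm_eq_of_tendsto [l.NeBot] (hp : Tendsto p l (𝓝 P)) (hq : Tendsto q l (𝓝 Q))
    (him : ∀ n, chordIm d (p n) = chordIm d (q n)) : chordIm d P = chordIm d Q :=
  (isClosed_setOf_chordIm_eq d).mem_of_tendsto (hp.prodMk_nhds hq) (Eventually.of_forall him)

lemma not_linked_of_tendsto [l.NeBot] (hp : Tendsto p l (𝓝 P)) (hq : Tendsto q l (𝓝 Q))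
    (hnl : ∀ n, ¬ Linked (p n) (q n)) : ¬ Linked P Q := fun hPQ =>
  ((hp.prodMk_nhds hq).eventually (isOpen_setOf_linked.mem_nhds hPQ)).exists.elim
    fun n hn => hnl n hn

lemma fst_ne_fst_of_tendsto [l.NeBot] (hd : d ≠ 0) (hp : Tendsto p l (𝓝 P))
    (hq : Tendsto q l (𝓝 Q)) (hne : ∀ n, (p n).1 ≠ (q n).1)
    (him : ∀ n, chordIm d (p n) = chordIm d (q n)) (hQ : sig d Q.1 ≠ sig d Q.2) :
    P.1 ≠ Q.1 := by
  intro hPQ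
  have hq₁ : Tendsto (fun n => (q n).1) l (𝓝 P.1) := hPQ ▸ hq.fst_nhds
  have hmatch : ∀ᶠ n in l, sig d (p n).1 = sig d (q n).2 := by
    filter_upwards [eventually_eq_of_nsmul_eq (AddCircle.finite_torsion _ (Nat.pos_of_ne_zero hd))
      hp.fst_nhds hq₁] with n hinj
    have hmem : sig d (p n).1 ∈ chordIm d (q n) := him n ▸ Set.mem_insert _ _
    exact hmem.resolve_left fun h => hne n (hinj h)
  apply hQ
  calc sig d Q.1 = sig d P.1 := by rw [hPQ]
    _ = sig d Q.2 := tendsto_nhds_unique_of_eventuallyEq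
        (((continuous_sig d).tendsto _).comp hp.fst_nhds)
        (((continuous_sig d).tendsto _).comp hq.snd_nhds) hmatch

lemma chordDisj_of_tendsto [l.NeBot] (hd : d ≠ 0) (hp : Tendsto p l (𝓝 P))
    (hq : Tendsto q l (𝓝 Q)) (hdisj : ∀ n, ChordDisj (p n) (q n))
    (him : ∀ n, chordIm d (p n) = chordIm d (q n)) (hQ : sig d Q.1 ≠ sig d Q.2) :
    ChordDisj P Q := by
  have hswap : ∀ {r : α → S1 × S1} {R : S1 × S1}, Tendsto r l (𝓝 R) →
      Tendsto (fun n => (r n).swap) l (𝓝 R.swap) :=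
    fun hr => (continuous_swap.tendsto _).comp hr
  refine ⟨fst_ne_fst_of_tendsto hd hp hq (fun n => (hdisj n).1) him hQ,
    fst_ne_fst_of_tendsto hd hp (hswap hq) (fun n => (hdisj n).2.1)
      (fun n => by rw [chordIm_swap, him]) hQ.symm,
    fst_ne_fst_of_tendsto hd (hswap hp) hq (fun n => (hdisj n).2.2.1)
      (fun n => by rw [chordIm_swap, him]) hQ,
    fst_ne_fst_of_tendsto hd (hswap hp) (hswap hq) (fun n => (hdisj n).2.2.2.1)
      (fun n => by rw [chordIm_swap, chordIm_swap, him]) hQ.symm,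
    not_linked_of_tendsto hp hq fun n => (hdisj n).2.2.2.2⟩

end Limits

theorem limit_of_sibling_collections_general (d : ℕ)
    (F : ℕ → Fin d → S1 × S1) (L : Fin d → S1 × S1)
    (hsib : ∀ n, SiblingCollection d (F n))
    (hconv : ∀ i, Tendsto (fun n => F n i) atTop (𝓝 (L i)))
    (hlimnd : ∀ i, sig d (L i).1 ≠ sig d (L i).2) :
    SiblingCollection d L :=
  ⟨fun i j hij => chordDisj_of_tendsto i.pos.ne' (hconv i) (hconv j)
      (fun n => (hsib n).1 i j hij) (fun n => (hsib n).2 i j) (hlimnd j),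
    fun i j => chordIm_eq_of_tendsto (hconv i) (hconv j) fun n => (hsib n).2 i j⟩

/-- A limit of full sibling collections whose limit image chord is
non-degenerate is again a full sibling collection: the limit chords are pairwise disjoint
and have a common image. -/
theorem limit_of_sibling_collections (d : ℕ) (hd : 2 ≤ d)
    (F : ℕ → Fin d → S1 × S1) (L : Fin d → S1 × S1)
    (hsib : ∀ n, SiblingCollection d (F n))
    (hnd : ∀ n i, sig d (F n i).1 ≠ sig d (F n i).2)
    (hconv : ∀ i, Tendsto (fun n => F n i) atTop (𝓝 (L i)))
    (hlimnd : ∀ i, sig d (L i).1 ≠ sig d (L i).2) :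
    SiblingCollection d L :=
  limit_of_sibling_collections_general d F L hsib hconv hlimnd
end
end

section
/- Let d ≥ 2 and let C be a full critical collection for σ_d (pairwise unlinked critical chords such that on the boundary circle points of each complementary component of the disk, σ_d is injective apart from identifying endpoints of critical edges). Then C contains a critical chord whose endpoints bound a circle arc of length exactly 1/d. -/
noncomputable section

def circleMap1 : ℝ → ℂ := fun x => Complex.exp (2 * Real.pi * Complex.I * (x : ℂ))

theorem circleMap1_periodic : Function.Periodic circleMap1 1 := by
  intro x
  unfold circleMap1
  push_cast
  rw [mul_add, Complex.exp_add, mul_one, Complex.exp_two_pi_mul_I, mul_one]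

/-- The standard embedding of the circle `ℝ/ℤ` into the plane (unit circle in `ℂ`). -/
def toC : S1 → ℂ := circleMap1_periodic.lift

/-- The chord with endpoints `p.1, p.2`, realized as a straight segment in the closed disk. -/
def chordSeg (p : S1 × S1) : Set ℂ := segment ℝ (toC p.1) (toC p.2)

/-! If no chord of `C` spans an arc of length `1/d`, take a chord `p` whose shorter arc has
minimal length `k/d`, `k ≥ 2`. An endpoint of another chord inside that arc would make the other
chord, being at least as long, cross `p`; so the middle subarc of length `1/d` contains no
endpoint. A thin collar inside the disk along this subarc then lies in one complementary
component, whose closure contains both ends of the subarc; these have the same `σ_d`-image and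
are not endpoints, against fullness. -/

open Set Metric

def SpansArc (p : S1 × S1) (ℓ : ℝ) : Prop :=
  p.2 - p.1 = (ℓ : S1) ∨ p.1 - p.2 = (ℓ : S1)

def IsEndpoint (C : Finset (S1 × S1)) (x : S1) : Prop :=
  ∃ p ∈ C, x = p.1 ∨ x = p.2

def chordComplement (C : Finset (S1 × S1)) : Set ℂ :=
  ball 0 1 \ ⋃ p ∈ C, chordSeg p

def IsFull (d : ℕ) (C : Finset (S1 × S1)) : Prop :=
  ∀ z ∈ chordComplement C, ∀ x y : S1,
    toC x ∈ closure (connectedComponentIn (chordComplement C) z) →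
    toC y ∈ closure (connectedComponentIn (chordComplement C) z) →
    sig d x = sig d y → x = y ∨ (IsEndpoint C x ∧ IsEndpoint C y)

@[fun_prop]
lemma continuous_circleMap1 : Continuous circleMap1 := by
  unfold circleMap1; fun_prop

lemma toC_eq_toCircle (x : S1) : toC x = AddCircle.toCircle x := by
  induction x using QuotientAddGroup.induction_on with
  | H t =>
    rw [toC, Function.Periodic.lift_coe, AddCircle.toCircle_apply_mk, Circle.coe_exp,
      circleMap1]
    push_cast
    ring_nf

lemma toC_injective : Function.Injective toC := by
  intro x y h
  rw [toC_eq_toCircle, toC_eq_toCircle] at h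
  exact AddCircle.injective_toCircle one_ne_zero (Circle.coe_injective h)

lemma norm_toC (x : S1) : ‖toC x‖ = 1 := by
  rw [toC_eq_toCircle]; exact Circle.norm_coe _

lemma norm_circleMap1 (t : ℝ) : ‖circleMap1 t‖ = 1 := norm_toC t

lemma eq_or_eq_of_toC_mem_chordSeg {x : S1} {p : S1 × S1} (h : toC x ∈ chordSeg p) :
    x = p.1 ∨ x = p.2 := by
  rw [chordSeg, ← insert_endpoints_openSegment (𝕜 := ℝ)] at h
  rcases h with h | h | h
  · exact Or.inl (toC_injective h)
  · exact Or.inr (toC_injective h)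
  · by_cases hp : toC p.1 = toC p.2
    · rw [hp, openSegment_same ℝ] at h
      exact Or.inr (toC_injective h)
    · have hball := openSegment_subset_ball_of_ne (z := 0) (r := 1)
        (by simp [norm_toC]) (by simp [norm_toC]) hp h
      simp [norm_toC] at hball

lemma isClosed_chordSeg (p : S1 × S1) : IsClosed (chordSeg p) := by
  rw [chordSeg, ← convexHull_pair (𝕜 := ℝ)]
  exact ((toFinite _).isCompact_convexHull ℝ).isClosed

lemma exists_isPreconnected_subset_ball_diff {F : Set ℂ} (hF : IsClosed F) {a b : ℝ}
    (hdisj : Disjoint (circleMap1 '' Icc a b) F) :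
    ∃ K ⊆ ball 0 1 \ F, IsPreconnected K ∧ circleMap1 '' Icc a b ⊆ closure K := by
  obtain ⟨δ, hδ, hthick⟩ :=
    (isCompact_Icc.image continuous_circleMap1).exists_thickening_subset_open hF.isOpen_compl
      hdisj.subset_compl_right
  set r := max (1 - δ) 0
  have hr : r < 1 := max_lt (by linarith) one_pos
  set g : ℝ × ℝ → ℂ := fun q => q.1 * circleMap1 q.2
  have hg : Continuous g := by fun_prop
  have hnorm : ∀ s t : ℝ, 0 ≤ s → ‖g (s, t)‖ = s := fun s t hs => by
    simp [g, norm_circleMap1, abs_of_nonneg hs]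
  refine ⟨g '' (Ioo r 1 ×ˢ Icc a b), ?_, ?_, ?_⟩
  · rintro _ ⟨⟨s, t⟩, ⟨⟨hrs, hs1⟩, ht⟩, rfl⟩
    have hs0 : 0 ≤ s := (le_max_right _ _).trans hrs.le
    refine ⟨by rw [mem_ball_zero_iff, hnorm s t hs0]; exact hs1, hthick ?_⟩
    refine mem_thickening_iff.2 ⟨circleMap1 t, ⟨t, ht, rfl⟩, ?_⟩
    have hdist : g (s, t) - circleMap1 t = ((s - 1 : ℝ) : ℂ) * circleMap1 t := by
      simp only [g]; push_cast; ring
    rw [dist_eq_norm, hdist, norm_mul, norm_circleMap1, Complex.norm_real, Real.norm_eq_abs,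
      abs_of_neg (by linarith), mul_one]
    linarith [le_max_left (1 - δ) 0]
  · exact ((convex_Ioo r 1).prod (convex_Icc a b)).isPreconnected.image g hg.continuousOn
  · rintro _ ⟨t, ht, rfl⟩
    have hmem : ((1 : ℝ), t) ∈ closure (Ioo r 1 ×ˢ Icc a b) := by
      rw [closure_prod_eq, closure_Ioo hr.ne, closure_Icc]
      exact ⟨⟨hr.le, le_rfl⟩, ht⟩
    simpa [g] using image_closure_subset_closure_image hg ⟨_, hmem, rfl⟩

theorem IsFull.coe_eq_of_forall_not_isEndpoint {d : ℕ} {C : Finset (S1 × S1)}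
    (hfull : IsFull d C) {a b : ℝ} (hab : a ≤ b) (hsig : sig d a = sig d b)
    (hfree : ∀ t ∈ Icc a b, ¬ IsEndpoint C t) : (a : S1) = b := by
  have hF : IsClosed (⋃ p ∈ C, chordSeg p) :=
    isClosed_biUnion_finset fun p _ => isClosed_chordSeg p
  have hdisj : Disjoint (circleMap1 '' Icc a b) (⋃ p ∈ C, chordSeg p) := by
    rw [disjoint_left]
    rintro _ ⟨t, ht, rfl⟩ hmem
    obtain ⟨p, hp, hseg⟩ := mem_iUnion₂.1 hmem
    exact hfree t ht ⟨p, hp, eq_or_eq_of_toC_mem_chordSeg hseg⟩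
  obtain ⟨K, hKU, hK, harc⟩ := exists_isPreconnected_subset_ball_diff hF hdisj
  have hcl : ∀ t ∈ Icc a b, toC t ∈ closure K := fun t ht => harc ⟨t, ht, rfl⟩
  have ha : a ∈ Icc a b := ⟨le_rfl, hab⟩
  have hb : b ∈ Icc a b := ⟨hab, le_rfl⟩
  obtain ⟨z, hz⟩ : K.Nonempty := closure_nonempty_iff.1 ⟨_, hcl a ha⟩
  have hKz : closure K ⊆ closure (connectedComponentIn (chordComplement C) z) :=
    closure_mono (hK.subset_connectedComponentIn hz hKU)
  rcases hfull z (hKU hz) a b (hKz (hcl a ha)) (hKz (hcl b hb)) hsig with h | ⟨hend, -⟩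
  · exact h
  · exact absurd hend (hfree a ha)

lemma sig_coe_add_one_div {d : ℕ} (hd : d ≠ 0) (t : ℝ) :
    sig d ((t + 1 / d : ℝ) : S1) = sig d (t : S1) := by
  have hd' : (d : ℝ) ≠ 0 := Nat.cast_ne_zero.2 hd
  rw [sig, sig, ← AddCircle.coe_nsmul, ← AddCircle.coe_nsmul, nsmul_eq_mul, nsmul_eq_mul, mul_add,
    mul_one_div_cancel hd', AddCircle.coe_add_period]

lemma exists_spansArc_of_sig_eq {d : ℕ} (hd : 0 < d) {p : S1 × S1} (hne : p.1 ≠ p.2)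
    (hsig : sig d p.1 = sig d p.2) : ∃ k : ℕ, 1 ≤ k ∧ 2 * k ≤ d ∧ SpansArc p (k / d) := by
  obtain ⟨x, ⟨hx0, hx1⟩, hx⟩ := AddCircle.eq_coe_Ico (p.2 - p.1)
  have hx0' : 0 < x := hx0.lt_of_ne <| by
    rintro rfl
    exact hne (sub_eq_zero.1 (hx.symm.trans (AddCircle.coe_zero 1))).symm
  have hdx : ((d * x : ℝ) : S1) = 0 := by
    rw [← nsmul_eq_mul, AddCircle.coe_nsmul, hx, nsmul_sub]
    exact sub_eq_zero.2 hsig.symm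
  obtain ⟨n, hn⟩ := (AddCircle.coe_eq_zero_iff 1).1 hdx
  rw [zsmul_one] at hn
  have hd' : (0 : ℝ) < d := Nat.cast_pos.2 hd
  have hn0 : 0 < n := Int.cast_pos.1 (hn ▸ mul_pos hd' hx0')
  have hnd : n < d := by exact_mod_cast (hn ▸ mul_lt_of_lt_one_right hd' hx1 : (n : ℝ) < d)
  lift n to ℕ using hn0.le
  have hxn : x = n / d := by rw [eq_div_iff hd'.ne']; push_cast at hn; linarith
  rcases le_or_gt (2 * n) d with h | h
  · exact ⟨n, by omega, h, Or.inl (by rw [← hx, hxn])⟩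
  · refine ⟨d - n, by omega, by omega, Or.inr ?_⟩
    rw [← neg_sub, ← hx, ← AddCircle.coe_neg, ← AddCircle.coe_add_period 1 (-x), hxn,
      Nat.cast_sub (by omega : n ≤ d)]
    congr 1
    field_simp
    ring

lemma SpansArc.exists_pair_eq {p : S1 × S1} {ℓ : ℝ} (hp : SpansArc p ℓ) :
    ∃ u : ℝ, ({p.1, p.2} : Set S1) = {(u : S1), ((u + ℓ : ℝ) : S1)} := by
  obtain ⟨u, hu⟩ := QuotientAddGroup.mk_surjective p.1
  rcases hp with h | h
  · exact ⟨u, by rw [AddCircle.coe_add, ← h, hu, add_sub_cancel]⟩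
  · refine ⟨u - ℓ, ?_⟩
    rw [sub_add_cancel, AddCircle.coe_sub, ← h, hu, sub_sub_cancel, pair_comm]

lemma SpansArc.exists_pair_eq_of_mem {q : S1 × S1} {ℓ t : ℝ} (hq : SpansArc q ℓ)
    (ht : (t : S1) = q.1 ∨ (t : S1) = q.2) :
    ∃ s, (s = t + ℓ ∨ s = t - ℓ) ∧ ({q.1, q.2} : Set S1) = {(t : S1), (s : S1)} := by
  rcases ht with ht | ht <;> rcases hq with h | h
  · exact ⟨t + ℓ, .inl rfl, by rw [AddCircle.coe_add, ht, ← h, add_sub_cancel]⟩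
  · exact ⟨t - ℓ, .inr rfl, by rw [AddCircle.coe_sub, ht, ← h, sub_sub_cancel]⟩
  · exact ⟨t - ℓ, .inr rfl, by rw [AddCircle.coe_sub, ht, ← h, sub_sub_cancel, pair_comm]⟩
  · exact ⟨t + ℓ, .inl rfl, by rw [AddCircle.coe_add, ht, ← h, add_sub_cancel, pair_comm]⟩

lemma linked_of_pair_eq {p q : S1 × S1} {a b x y : S1} (hp : ({p.1, p.2} : Set S1) = {a, b})
    (hq : ({q.1, q.2} : Set S1) = {x, y}) (hx : StrictArc a x b) (hy : StrictArc b y a) :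
    Linked p q := by
  rcases pair_eq_pair_iff.1 hp with ⟨h1, h2⟩ | ⟨h1, h2⟩ <;>
    rcases pair_eq_pair_iff.1 hq with ⟨h3, h4⟩ | ⟨h3, h4⟩ <;>
    simp only [Linked, h1, h2, h3, h4] <;> tauto

lemma linked_of_mem_Ioo {p q : S1 × S1} {u ℓ m t : ℝ}
    (hp : ({p.1, p.2} : Set S1) = {(u : S1), ((u + ℓ : ℝ) : S1)}) (hq : SpansArc q m)
    (ht : (t : S1) = q.1 ∨ (t : S1) = q.2) (hut : t ∈ Ioo u (u + ℓ)) (hℓm : ℓ ≤ m)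
    (hm : m ≤ 1 / 2) : Linked p q := by
  obtain ⟨s, hs, hqs⟩ := hq.exists_pair_eq_of_mem ht
  obtain ⟨s', ⟨hs'₁, hs'₂⟩, hs'⟩ : ∃ s' ∈ Ioo (u + ℓ) (u + 1), (s' : S1) = s := by
    rcases hs with rfl | rfl
    · exact ⟨t + m, ⟨by linarith [hut.1], by linarith [hut.2]⟩, rfl⟩
    · exact ⟨t - m + 1, ⟨by linarith [hut.1], by linarith [hut.2]⟩, AddCircle.coe_add_period 1 _⟩
  rw [← hs'] at hqs
  exact linked_of_pair_eq hp hqs ⟨u, t, u + ℓ, rfl, rfl, rfl, hut.1, hut.2, by linarith⟩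
    ⟨u + ℓ, s', u + 1, rfl, rfl, AddCircle.coe_add_period 1 u, hs'₁, hs'₂,
      by linarith [hut.1, hut.2]⟩

lemma exists_forall_not_isEndpoint {d : ℕ} (hd : 0 < d) {C : Finset (S1 × S1)}
    (hcrit : ∀ p ∈ C, p.1 ≠ p.2 ∧ sig d p.1 = sig d p.2)
    (hunlinked : ∀ p ∈ C, ∀ q ∈ C, ¬ Linked p q) (hno : ¬ ∃ p ∈ C, SpansArc p (1 / d)) :
    ∃ t₀ : ℝ, ∀ t ∈ Icc t₀ (t₀ + 1 / d), ¬ IsEndpoint C t := by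
  classical
  rcases C.eq_empty_or_nonempty with rfl | ⟨p₀, hp₀⟩
  · exact ⟨0, fun t _ ⟨p, hp, _⟩ => Finset.notMem_empty p hp⟩
  have hex : ∃ k, ∃ p ∈ C, 1 ≤ k ∧ 2 * k ≤ d ∧ SpansArc p (k / d) := by
    obtain ⟨k, hk⟩ := exists_spansArc_of_sig_eq hd (hcrit p₀ hp₀).1 (hcrit p₀ hp₀).2
    exact ⟨k, p₀, hp₀, hk⟩
  obtain ⟨p, hp, hk1, -, hpk⟩ := Nat.find_spec hex
  set k := Nat.find hex
  have hk2 : 2 ≤ k := by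
    by_contra h
    exact hno ⟨p, hp, by rwa [show k = 1 by omega, Nat.cast_one] at hpk⟩
  obtain ⟨u, hu⟩ := hpk.exists_pair_eq
  have hd' : (0 : ℝ) < d := Nat.cast_pos.2 hd
  have hk : (1 : ℝ) / d < k / d := div_lt_div_of_pos_right (by exact_mod_cast hk2) hd'
  refine ⟨u + (k / d - 1 / d) / 2, ?_⟩
  rintro t ⟨ht₁, ht₂⟩ ⟨q, hq, htq⟩
  obtain ⟨m, hm1, hm2, hqm⟩ := exists_spansArc_of_sig_eq hd (hcrit q hq).1 (hcrit q hq).2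
  have hkm : (k : ℝ) / d ≤ m / d :=
    div_le_div_of_nonneg_right (by exact_mod_cast Nat.find_min' hex ⟨q, hq, hm1, hm2, hqm⟩) hd'.le
  have hm : (m : ℝ) / d ≤ 1 / 2 := by
    have : (2 * m : ℝ) ≤ d := by exact_mod_cast hm2
    rw [div_le_iff₀ hd']
    linarith
  exact hunlinked p hp q hq
    (linked_of_mem_Ioo hu hqm htq ⟨by linarith, by linarith⟩ hkm hm)

theorem full_collection_has_short_chord_general (d : ℕ) (hd : 2 ≤ d)
    (C : Finset (S1 × S1))
    (hcrit : ∀ p ∈ C, p.1 ≠ p.2 ∧ sig d p.1 = sig d p.2)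
    (hunlinked : ∀ p ∈ C, ∀ q ∈ C, ¬ Linked p q)
    (hfull : ∀ z ∈ Metric.ball (0 : ℂ) 1 \ ⋃ p ∈ C, chordSeg p,
      ∀ x y : S1,
        toC x ∈ closure (connectedComponentIn (Metric.ball (0 : ℂ) 1 \ ⋃ p ∈ C, chordSeg p) z) →
        toC y ∈ closure (connectedComponentIn (Metric.ball (0 : ℂ) 1 \ ⋃ p ∈ C, chordSeg p) z) →
        sig d x = sig d y →
        x = y ∨ ((∃ p ∈ C, x = p.1 ∨ x = p.2) ∧ ∃ p ∈ C, y = p.1 ∨ y = p.2)) :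
    ∃ p ∈ C, p.2 - p.1 = ((1 / (d : ℝ) : ℝ) : S1) ∨ p.1 - p.2 = ((1 / (d : ℝ) : ℝ) : S1) := by
  by_contra hno
  obtain ⟨t₀, hfree⟩ := exists_forall_not_isEndpoint (by omega) hcrit hunlinked hno
  have hlt : (1 : ℝ) / d < 1 := by
    rw [div_lt_one (by positivity)]; exact_mod_cast hd
  have hpos : (0 : ℝ) < 1 / d := by positivity
  have heq : ((t₀ : ℝ) : S1) = ((t₀ + 1 / d : ℝ) : S1) :=
    IsFull.coe_eq_of_forall_not_isEndpoint hfull (by linarith)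
      (sig_coe_add_one_div (by omega) t₀).symm hfree
  have := (AddCircle.coe_eq_coe_iff_of_mem_Ico (a := t₀) ⟨le_rfl, by linarith⟩
    ⟨by linarith, by linarith⟩).1 heq
  linarith

/-- A full critical collection for σ_d — a finite family of distinct pairwise
unlinked critical chords such that, on the circle points of the closure of each connected
component of the complement of the chords in the open disk, σ_d is injective apart from
identifying endpoints of critical edges — contains a critical chord whose endpoints bound
a circle arc of length exactly `1/d`. -/
theorem full_collection_has_short_chord (d : ℕ) (hd : 2 ≤ d)
    (C : Finset (S1 × S1))
    (hcrit : ∀ p ∈ C, p.1 ≠ p.2 ∧ sig d p.1 = sig d p.2)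
    (hdistinct : ∀ p ∈ C, ∀ q ∈ C, p ≠ q → ({p.1, p.2} : Set S1) ≠ {q.1, q.2})
    (hunlinked : ∀ p ∈ C, ∀ q ∈ C, ¬ Linked p q)
    (hfull : ∀ z ∈ Metric.ball (0 : ℂ) 1 \ ⋃ p ∈ C, chordSeg p,
      ∀ x y : S1,
        toC x ∈ closure (connectedComponentIn (Metric.ball (0 : ℂ) 1 \ ⋃ p ∈ C, chordSeg p) z) →
        toC y ∈ closure (connectedComponentIn (Metric.ball (0 : ℂ) 1 \ ⋃ p ∈ C, chordSeg p) z) →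
        sig d x = sig d y →
        x = y ∨ ((∃ p ∈ C, x = p.1 ∨ x = p.2) ∧ ∃ p ∈ C, y = p.1 ∨ y = p.2)) :
    ∃ p ∈ C, p.2 - p.1 = ((1 / (d : ℝ) : ℝ) : S1) ∨ p.1 - p.2 = ((1 / (d : ℝ) : ℝ) : S1) :=
  full_collection_has_short_chord_general d hd C hcrit hunlinked hfull
end
end

section
/- Let d ≥ 2 and let ∼ be a σ_d-invariant laminational equivalence relation on the circle (closed, with finite classes having pairwise unlinked convex hulls, forward invariant, and with σ_d restricted to each class a positively oriented covering onto its image class). If {x, y} is an edge of the convex hull of some ∼-class and x is σ_d-periodic of period n, then y is also σ_d-periodic of period n. -/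
noncomputable section

/-- A σ_d-invariant laminational equivalence relation on the circle. -/
structure LamEq (d : ℕ) where
  /-- the relation -/
  r : S1 → S1 → Prop
  refl : ∀ x, r x x
  symm : ∀ {x y}, r x y → r y x
  trans : ∀ {x y z}, r x y → r y z → r x z
  /-- (E1) the graph of the relation is closed -/
  closed : IsClosed {p : S1 × S1 | r p.1 p.2}
  /-- (E3) all classes are finite -/
  finite : ∀ x, {y | r x y}.Finite
  /-- (E2) convex hulls of distinct classes are unlinked (hence disjoint) -/
  unlinked : ∀ x y z w, r x y → r z w → ¬ r x z → ¬ Linked (x, y) (z, w)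
  /-- (D1) the image of a class is a class -/
  forward : ∀ x, sig d '' {y | r x y} = {z | r (sig d x) z}
  /-- (D3) on classes with more than two points, σ_d is a positively oriented covering map
  onto the image class: every hole of a class maps to a degenerate arc or to a hole of
  the image class. -/
  posOriented : ∀ x, 2 < Set.ncard {y | r x y} →
    ∀ s t, r x s → r x t → s ≠ t → (∀ z, r x z → ¬ StrictArc s z t) →
      sig d s = sig d t ∨ ∀ w, r (sig d x) w → ¬ StrictArc (sig d s) w (sig d t)

/-- `{x, y}` is an edge of the convex hull of the class of `x`: both endpoints lie in one
class and one of the two open arcs determined by them contains no point of the class. -/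
def LamEq.IsEdge {d : ℕ} (E : LamEq d) (x y : S1) : Prop :=
  E.r x y ∧ x ≠ y ∧
    ((∀ z, E.r x z → ¬ StrictArc x z y) ∨ (∀ z, E.r x z → ¬ StrictArc y z x))

lemma strictArc_cyc {a b c : S1} (h : StrictArc a b c) : StrictArc b c a := by
  obtain ⟨u, v, w, ha, hb, hc, h1, h2, h3⟩ := h
  exact ⟨v, w, u + 1, hb, hc, by rw [AddCircle.coe_add_period]; exact ha, h2, h3, by linarith⟩

lemma strictArc_tri {a b c : S1} (hab : a ≠ b) (hac : a ≠ c) (hbc : b ≠ c) :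
    StrictArc a b c ∨ StrictArc a c b := by
  obtain ⟨α, rfl⟩ := QuotientAddGroup.mk_surjective a
  have hβmem : ((AddCircle.equivIco 1 α b : ℝ)) ∈ Set.Ico α (α + 1) := (AddCircle.equivIco 1 α b).2
  have hβ : (((AddCircle.equivIco 1 α b : ℝ)) : S1) = b := (AddCircle.equivIco 1 α).symm_apply_apply b
  have hγmem : ((AddCircle.equivIco 1 α c : ℝ)) ∈ Set.Ico α (α + 1) := (AddCircle.equivIco 1 α c).2
  have hγ : (((AddCircle.equivIco 1 α c : ℝ)) : S1) = c := (AddCircle.equivIco 1 α).symm_apply_apply c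
  set β : ℝ := ((AddCircle.equivIco 1 α b : ℝ))
  set γ : ℝ := ((AddCircle.equivIco 1 α c : ℝ))
  have hαβ : α < β := lt_of_le_of_ne hβmem.1 (fun h => hab (h ▸ hβ ▸ rfl))
  have hαγ : α < γ := lt_of_le_of_ne hγmem.1 (fun h => hac (h ▸ hγ ▸ rfl))
  have hβγ : β ≠ γ := fun h => hbc (by rw [← hβ, ← hγ, h])
  rcases lt_or_gt_of_ne hβγ with h | h
  · exact Or.inl ⟨α, β, γ, rfl, hβ, hγ, hαβ, h, hγmem.2⟩
  · exact Or.inr ⟨α, γ, β, rfl, hγ, hβ, hαγ, h, hβmem.2⟩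

namespace Test
variable {d : ℕ} (E : LamEq d)

lemma classEq {a b : S1} (h : E.r a b) : {z | E.r a z} = {z | E.r b z} := by
  ext z; exact ⟨fun hz => E.trans (E.symm h) hz, fun hz => E.trans h hz⟩

lemma iter_image (k : ℕ) (a : S1) :
    (sig d)^[k] '' {z | E.r a z} = {z | E.r ((sig d)^[k] a) z} := by
  induction k generalizing a with
  | zero => simp
  | succ k ih =>
    rw [Function.iterate_succ, Set.image_comp, E.forward a, ih (sig d a)]
    rfl

lemma key {x c : S1} (hc : E.r x c) {N : ℕ} (hfix : (sig d)^[N] c = c) :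
    (sig d)^[N] '' {z | E.r x z} = {z | E.r x z} ∧
      Set.InjOn ((sig d)^[N]) {z | E.r x z} := by
  have h1 : (sig d)^[N] '' {z | E.r x z} = {z | E.r x z} := by
    rw [classEq E hc, iter_image, hfix]
  refine ⟨h1, Set.injOn_of_ncard_image_eq (by rw [h1]) (E.finite x)⟩

lemma card_iter {x : S1} {N : ℕ} (himg : (sig d)^[N] '' {z | E.r x z} = {z | E.r x z})
    {k : ℕ} (hk : k ≤ N) :
    Set.ncard {z | E.r ((sig d)^[k] x) z} = Set.ncard {z | E.r x z} := by
  have anti : ∀ a b : ℕ, Set.ncard {z | E.r ((sig d)^[a + b] x) z} ≤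
      Set.ncard {z | E.r ((sig d)^[a] x) z} := by
    intro a b
    induction b with
    | zero => rfl
    | succ b ih =>
      calc Set.ncard {z | E.r ((sig d)^[a + (b+1)] x) z}
          = Set.ncard (sig d '' {z | E.r ((sig d)^[a + b] x) z}) := by
            rw [Nat.add_succ, Function.iterate_succ_apply', ← E.forward]
        _ ≤ Set.ncard {z | E.r ((sig d)^[a + b] x) z} :=
            Set.ncard_image_le (E.finite ((sig d)^[a+b] x))
        _ ≤ _ := ih
  have hN : Set.ncard {z | E.r ((sig d)^[N] x) z} = Set.ncard {z | E.r x z} := by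
    rw [← iter_image E N x, himg]
  have h1 : Set.ncard {z | E.r ((sig d)^[N] x) z} ≤ Set.ncard {z | E.r ((sig d)^[k] x) z} := by
    have := anti k (N - k); rwa [Nat.add_sub_cancel' hk] at this
  have h2 : Set.ncard {z | E.r ((sig d)^[k] x) z} ≤ Set.ncard {z | E.r x z} := by
    have := anti 0 k; simpa using this
  omega


lemma holes {x c : S1} (hc : E.r x c) {N : ℕ} (hfix : (sig d)^[N] c = c)
    (hcard : 2 < Set.ncard {z | E.r x z})
    {s t : S1} (hs : E.r x s) (ht : E.r x t) (hst : s ≠ t)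
    (hole : ∀ z, E.r x z → ¬ StrictArc s z t) :
    ∀ w, E.r x w → ¬ StrictArc ((sig d)^[N] s) w ((sig d)^[N] t) := by
  obtain ⟨himg, hinj⟩ := key E hc hfix
  -- non-collapse
  have nocol : ∀ k ≤ N, (sig d)^[k] s ≠ (sig d)^[k] t := by
    intro k hk h
    have hN : (sig d)^[N] s = (sig d)^[N] t := by
      have : N = (N - k) + k := (Nat.sub_add_cancel hk).symm
      rw [this, Function.iterate_add_apply, Function.iterate_add_apply, h]
    exact hst (hinj hs ht hN)
  have mem : ∀ k (z : S1), E.r x z → E.r ((sig d)^[k] x) ((sig d)^[k] z) := by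
    intro k z hz
    have : (sig d)^[k] z ∈ (sig d)^[k] '' {w | E.r x w} := ⟨z, hz, rfl⟩
    rwa [iter_image] at this
  have main : ∀ k ≤ N, ∀ w, E.r ((sig d)^[k] x) w →
      ¬ StrictArc ((sig d)^[k] s) w ((sig d)^[k] t) := by
    intro k hk
    induction k with
    | zero => simpa using hole
    | succ k ih =>
      have hk' : k ≤ N := Nat.le_of_succ_le hk
      have hcardk : 2 < Set.ncard {z | E.r ((sig d)^[k] x) z} := by
        rw [card_iter E himg hk']; exact hcard
      have hpo := E.posOriented ((sig d)^[k] x) hcardk ((sig d)^[k] s) ((sig d)^[k] t)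
        (mem k s hs) (mem k t ht) (nocol k hk') (ih hk')
      rcases hpo with h | h
      · exact absurd (by rw [Function.iterate_succ_apply', Function.iterate_succ_apply', h])
          (nocol (k+1) hk)
      · intro w hw
        simp only [Function.iterate_succ_apply'] at hw ⊢
        exact h w hw
  intro w hw
  have hxN : {z | E.r ((sig d)^[N] x) z} = {z | E.r x z} := by
    rw [← iter_image E N x, himg]
  exact main N le_rfl w ((Set.ext_iff.mp hxN w).mpr hw)

lemma hole_unique_right {x a a' c : S1}
    (ha : E.r x a) (ha' : E.r x a') (hac : a ≠ c) (ha'c : a' ≠ c)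
    (h1 : ∀ z, E.r x z → ¬ StrictArc a z c) (h2 : ∀ z, E.r x z → ¬ StrictArc a' z c) :
    a = a' := by
  by_contra hne
  rcases strictArc_tri hne hac ha'c with h | h
  · exact h1 a' ha' h
  · exact h2 a ha (strictArc_cyc (strictArc_cyc h))

lemma hole_unique_left {x a a' c : S1}
    (ha : E.r x a) (ha' : E.r x a') (hac : c ≠ a) (ha'c : c ≠ a')
    (h1 : ∀ z, E.r x z → ¬ StrictArc c z a) (h2 : ∀ z, E.r x z → ¬ StrictArc c z a') :
    a = a' := by
  by_contra hne
  rcases strictArc_tri hac ha'c (fun h => hne h) with h | h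
  · exact h2 a ha h
  · exact h1 a' ha' h

end Test

/-- If `{x, y}` is an edge of the convex hull of a class of a σ_d-invariant
laminational equivalence relation and `x` is σ_d-periodic of (minimal) period `n`, then `y`
is also σ_d-periodic of period `n`. -/
theorem edge_endpoints_same_period (d : ℕ) (hd : 2 ≤ d) (E : LamEq d)
    (x y : S1) (hedge : E.IsEdge x y) (n : ℕ) (hn : 0 < n)
    (hx : Function.minimalPeriod (sig d) x = n) :
    Function.minimalPeriod (sig d) y = n := by
  obtain ⟨hrxy, hxy, hedge'⟩ := hedge
  have hxC : E.r x x := E.refl x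
  have hfnx : (sig d)^[n] x = x := by
    have := Function.isPeriodicPt_minimalPeriod (sig d) x
    rwa [hx] at this
  obtain ⟨himgn, hinjn⟩ := Test.key E hxC hfnx
  have hyn : E.r x ((sig d)^[n] y) := (Set.ext_iff.mp himgn _).mp ⟨y, hrxy, rfl⟩
  have hfny_ne_x : (sig d)^[n] y ≠ x :=
    fun h => hxy (hinjn hrxy hxC (h.trans hfnx.symm)).symm
  have hfny : (sig d)^[n] y = y := by
    rcases lt_or_ge 2 (Set.ncard {z | E.r x z}) with hbig | hsmall
    · rcases hedge' with hole | hole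
      · have H := Test.holes E hxC hfnx hbig hxC hrxy hxy hole
        rw [hfnx] at H
        exact (Test.hole_unique_left E hrxy hyn hxy (Ne.symm hfny_ne_x) hole H).symm
      · have H := Test.holes E hxC hfnx hbig hrxy hxC (fun h => hxy h.symm) hole
        rw [hfnx] at H
        exact (Test.hole_unique_right E hrxy hyn (fun h => hxy h.symm) hfny_ne_x hole H).symm
    · have hsub : ({x, y} : Set S1) ⊆ {z | E.r x z} := by
        intro z hz
        rcases hz with h | h
        · exact h ▸ hxC
        · exact h ▸ hrxy
      have hC : ({x, y} : Set S1) = {z | E.r x z} :=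
        Set.eq_of_subset_of_ncard_le hsub (by rw [Set.ncard_pair hxy]; exact hsmall)
          (E.finite x)
      have hmem : (sig d)^[n] y ∈ ({x, y} : Set S1) := by rw [hC]; exact hyn
      rcases hmem with h | h
      · exact absurd h hfny_ne_x
      · exact h
  have hm1 : Function.minimalPeriod (sig d) y ∣ n :=
    Function.IsPeriodicPt.minimalPeriod_dvd hfny
  set m := Function.minimalPeriod (sig d) y with hmdef
  have hfmy : (sig d)^[m] y = y := Function.isPeriodicPt_minimalPeriod (sig d) y
  obtain ⟨himgm, hinjm⟩ := Test.key E hrxy hfmy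
  have hxm : E.r x ((sig d)^[m] x) := (Set.ext_iff.mp himgm _).mp ⟨x, hxC, rfl⟩
  have hfmx_ne_y : (sig d)^[m] x ≠ y :=
    fun h => hxy (hinjm hxC hrxy (h.trans hfmy.symm))
  have hfmx : (sig d)^[m] x = x := by
    rcases lt_or_ge 2 (Set.ncard {z | E.r x z}) with hbig | hsmall
    · rcases hedge' with hole | hole
      · have H := Test.holes E hrxy hfmy hbig hxC hrxy hxy hole
        rw [hfmy] at H
        exact Test.hole_unique_right E hxm hxC hfmx_ne_y hxy H hole
      · have H := Test.holes E hrxy hfmy hbig hrxy hxC (fun h => hxy h.symm) hole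
        rw [hfmy] at H
        exact Test.hole_unique_left E hxm hxC (Ne.symm hfmx_ne_y) (fun h => hxy h.symm) H hole
    · have hsub : ({x, y} : Set S1) ⊆ {z | E.r x z} := by
        intro z hz
        rcases hz with h | h
        · exact h ▸ hxC
        · exact h ▸ hrxy
      have hC : ({x, y} : Set S1) = {z | E.r x z} :=
        Set.eq_of_subset_of_ncard_le hsub (by rw [Set.ncard_pair hxy]; exact hsmall)
          (E.finite x)
      have hmem : (sig d)^[m] x ∈ ({x, y} : Set S1) := by rw [hC]; exact hxm
      rcases hmem with h | h
      · exact h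
      · exact absurd h hfmx_ne_y
  have hm2 : n ∣ m := by
    rw [← hx]
    exact Function.IsPeriodicPt.minimalPeriod_dvd hfmx
  exact Nat.dvd_antisymm hm1 hm2
end
end

section
/- Let d ≥ 2 and let ∼ be a σ_d-invariant laminational equivalence relation with all classes finite. Then no class contains both a periodic point of period n and a point that is not periodic of period n joined by an edge of its convex hull; consequently, if a chord ℓ has some forward σ_d-image connecting an n-periodic point to a point which is not n-periodic, then ℓ cannot be a leaf of any invariant q-lamination. -/
noncomputable section

/-!
If `σ^n x = x`, then `σ^n` maps the finite class of `x` onto itself, hence injectively.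
By (D3) a hole of a class is mapped either to a point or to a hole of the image class, and
injectivity excludes the first case. An edge `{x, y}` bounds a hole that starts or ends at `x`;
since a class has only one hole starting and one ending at a given point, `σ^n` must fix `y`.
For the second part, push a putative leaf `{a, b}` forward `m` times: its image is a point or
again an edge, and either way `σ^m b` is `n`-periodic because `σ^m a` is.
-/

namespace StrictArc

variable {a b c : S1}

lemma ne_left (h : StrictArc a b c) : b ≠ a := by
  obtain ⟨x, y, z, rfl, rfl, rfl, hxy, hyz, hzx⟩ := h
  rw [Ne, AddCircle.coe_eq_coe_iff_of_mem_Ico (a := x) ⟨hxy.le, by linarith⟩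
    ⟨le_rfl, by linarith⟩]
  exact hxy.ne'

lemma ne_right (h : StrictArc a b c) : b ≠ c := by
  obtain ⟨x, y, z, rfl, rfl, rfl, hxy, hyz, hzx⟩ := h
  rw [Ne, AddCircle.coe_eq_coe_iff_of_mem_Ico (a := x) ⟨hxy.le, by linarith⟩
    ⟨by linarith, hzx⟩]
  exact hyz.ne

lemma rotate (h : StrictArc a b c) : StrictArc b c a := by
  obtain ⟨x, y, z, rfl, rfl, rfl, hxy, hyz, hzx⟩ := h
  exact ⟨y, z, x + 1, rfl, rfl, by simp, hyz, hzx, by linarith⟩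

end StrictArc

lemma strictArc_or_strictArc {a b c : S1} (hba : b ≠ a) (hca : c ≠ a) (hbc : b ≠ c) :
    StrictArc a b c ∨ StrictArc a c b := by
  obtain ⟨x, rfl⟩ := QuotientAddGroup.mk_surjective a
  obtain ⟨y, hy, rfl⟩ : ∃ y ∈ Set.Ico x (x + 1), (y : S1) = b :=
    ⟨_, (AddCircle.equivIco 1 x b).2, AddCircle.coe_equivIco⟩
  obtain ⟨z, hz, rfl⟩ : ∃ z ∈ Set.Ico x (x + 1), (z : S1) = c :=
    ⟨_, (AddCircle.equivIco 1 x c).2, AddCircle.coe_equivIco⟩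
  have hxy : x < y := hy.1.lt_of_ne' (by rintro rfl; exact hba rfl)
  have hxz : x < z := hz.1.lt_of_ne' (by rintro rfl; exact hca rfl)
  rcases lt_or_gt_of_ne (show y ≠ z by rintro rfl; exact hbc rfl) with hyz | hzy
  · exact .inl ⟨x, y, z, rfl, rfl, rfl, hxy, hyz, hz.2⟩
  · exact .inr ⟨x, z, y, rfl, rfl, rfl, hxz, hzy, hy.2⟩

namespace LamEq

variable {d : ℕ} (E : LamEq d)

def IsHole (x y : S1) : Prop :=
  E.r x y ∧ x ≠ y ∧ ∀ z, E.r x z → ¬ StrictArc x z y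

variable {E} {x y : S1}

lemma class_eq (h : E.r x y) : {z | E.r x z} = {z | E.r y z} :=
  Set.ext fun _ => ⟨E.trans (E.symm h), E.trans h⟩

lemma r_sig (h : E.r x y) : E.r (sig d x) (sig d y) := by
  have hy : sig d y ∈ sig d '' {z | E.r x z} := ⟨y, h, rfl⟩
  rwa [E.forward] at hy

lemma image_iterate_class (m : ℕ) (x : S1) :
    (sig d)^[m] '' {y | E.r x y} = {z | E.r ((sig d)^[m] x) z} := by
  induction m generalizing x with
  | zero => simp
  | succ m ih =>
    rw [Function.iterate_succ', Set.image_comp, ih, E.forward, Function.comp_apply]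

lemma class_eq_pair (h : E.r x y) (hne : x ≠ y) (hcard : Set.ncard {z | E.r x z} ≤ 2) :
    {z | E.r x z} = {x, y} := by
  refine (Set.eq_of_subset_of_ncard_le ?_ ?_ (E.finite x)).symm
  · exact Set.pair_subset (E.refl x) h
  · rwa [Set.ncard_pair hne]

lemma IsHole.map_sig (h : E.IsHole x y) : sig d x = sig d y ∨ E.IsHole (sig d x) (sig d y) := by
  obtain ⟨hr, hne, hempty⟩ := h
  refine or_iff_not_imp_left.2 fun hne' => ⟨r_sig hr, hne', ?_⟩
  by_cases hcard : 2 < Set.ncard {z | E.r x z}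
  · exact (E.posOriented x hcard x y (E.refl x) hr hne hempty).resolve_left hne'
  · -- a two-point class maps onto `{σ x, σ y}`, and these are the ends of the arc
    intro w (hw : w ∈ {z | E.r (sig d x) z}) harc
    rw [← E.forward, class_eq_pair hr hne (not_lt.1 hcard), Set.image_pair] at hw
    rcases hw with rfl | rfl
    exacts [harc.ne_left rfl, harc.ne_right rfl]

lemma IsHole.iterate (h : E.IsHole x y) (m : ℕ) :
    (sig d)^[m] x = (sig d)^[m] y ∨ E.IsHole ((sig d)^[m] x) ((sig d)^[m] y) := by
  induction m with
  | zero => exact .inr h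
  | succ m ih =>
    simp only [Function.iterate_succ_apply']
    rcases ih with heq | hh
    · exact .inl (congrArg _ heq)
    · exact hh.map_sig

lemma IsHole.iterate_of_injOn (h : E.IsHole x y) {m : ℕ}
    (hinj : Set.InjOn (sig d)^[m] {z | E.r x z}) :
    E.IsHole ((sig d)^[m] x) ((sig d)^[m] y) :=
  (h.iterate m).resolve_left fun heq => h.2.1 (hinj (E.refl x) h.1 heq)

lemma IsHole.right_unique {y' : S1} (h : E.IsHole x y) (h' : E.IsHole x y') : y = y' := by
  by_contra hne
  rcases strictArc_or_strictArc h.2.1.symm h'.2.1.symm hne with harc | harc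
  · exact h'.2.2 y h.1 harc
  · exact h.2.2 y' h'.1 harc

lemma IsHole.left_unique {x' : S1} (h : E.IsHole x y) (h' : E.IsHole x' y) : x = x' := by
  by_contra hne
  have hr : E.r x x' := E.trans h.1 (E.symm h'.1)
  rcases strictArc_or_strictArc (Ne.symm hne) h.2.1.symm h'.2.1 with harc | harc
  · exact h.2.2 x' hr harc
  · exact h'.2.2 x (E.symm hr) harc.rotate.rotate

lemma injOn_class_of_iterate_eq {n : ℕ} (hper : (sig d)^[n] x = x) :
    Set.InjOn (sig d)^[n] {z | E.r x z} := by
  have him : (sig d)^[n] '' {z | E.r x z} = {z | E.r x z} := by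
    rw [image_iterate_class, hper]
  exact ((E.finite x).surjOn_iff_bijOn_of_mapsTo (Set.mapsTo_iff_image_subset.2 him.subset)).1
    him.superset |>.injOn

lemma isEdge_iff : E.IsEdge x y ↔ E.IsHole x y ∨ E.IsHole y x := by
  refine ⟨fun ⟨hr, hne, hempty⟩ => hempty.imp (fun h => ⟨hr, hne, h⟩)
    fun h => ⟨E.symm hr, hne.symm, fun z hz => h z (E.trans hr hz)⟩, ?_⟩
  rintro (⟨hr, hne, h⟩ | ⟨hr, hne, h⟩)
  · exact ⟨hr, hne, .inl h⟩
  · exact ⟨E.symm hr, hne.symm, .inr fun z hz => h z (E.trans hr hz)⟩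

lemma IsEdge.symm (he : E.IsEdge x y) : E.IsEdge y x :=
  isEdge_iff.2 (isEdge_iff.1 he).symm

lemma IsEdge.iterate (he : E.IsEdge x y) (m : ℕ) :
    (sig d)^[m] x = (sig d)^[m] y ∨ E.IsEdge ((sig d)^[m] x) ((sig d)^[m] y) := by
  rcases (isEdge_iff.1 he : E.IsHole x y ∨ E.IsHole y x) with h | h
  · exact (h.iterate m).imp_right fun h => isEdge_iff.2 (.inl h)
  · exact (h.iterate m).imp Eq.symm fun h => isEdge_iff.2 (.inr h)

lemma IsEdge.iterate_eq_of_iterate_eq {n : ℕ} (he : E.IsEdge x y)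
    (hper : (sig d)^[n] x = x) : (sig d)^[n] y = y := by
  have hinj := injOn_class_of_iterate_eq (E := E) hper
  rcases (isEdge_iff.1 he : E.IsHole x y ∨ E.IsHole y x) with h | h
  · exact (hper ▸ h.iterate_of_injOn hinj).right_unique h
  · rw [class_eq (E.symm h.1)] at hinj
    exact (hper ▸ h.iterate_of_injOn hinj).left_unique h

end LamEq

theorem improper_chord_not_a_leaf_general (d : ℕ) (n : ℕ) :
    (∀ E : LamEq d, ∀ x y : S1, E.IsEdge x y →
      (sig d)^[n] x = x → (sig d)^[n] y = y) ∧
    (∀ a b : S1,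
      (∃ m : ℕ, (sig d)^[n] ((sig d)^[m] a) = (sig d)^[m] a ∧
        (sig d)^[n] ((sig d)^[m] b) ≠ (sig d)^[m] b) →
      ∀ E : LamEq d, ¬ E.IsEdge a b ∧ ¬ E.IsEdge b a) := by
  refine ⟨fun E x y he hx => he.iterate_eq_of_iterate_eq hx, ?_⟩
  rintro a b ⟨m, ha, hb⟩ E
  have not_edge : ¬ E.IsEdge a b := fun he => by
    rcases he.iterate m with heq | he'
    · exact hb (heq ▸ ha)
    · exact hb (he'.iterate_eq_of_iterate_eq ha)
  exact ⟨not_edge, fun he => not_edge he.symm⟩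

/-- For a σ_d-invariant laminational equivalence relation, no class has an
edge of its convex hull joining an `n`-periodic point (`σ_d^n x = x`) to a point which is
not `n`-periodic. Consequently, if some forward image of a chord `{a, b}` connects an
`n`-periodic point to a non-`n`-periodic point, then `{a, b}` is not a leaf (edge of a
class) of any invariant q-lamination. -/
theorem improper_chord_not_a_leaf (d : ℕ) (hd : 2 ≤ d) (n : ℕ) (hn : 0 < n) :
    (∀ E : LamEq d, ∀ x y : S1, E.IsEdge x y →
      (sig d)^[n] x = x → (sig d)^[n] y = y) ∧
    (∀ a b : S1,
      (∃ m : ℕ, (sig d)^[n] ((sig d)^[m] a) = (sig d)^[m] a ∧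
        (sig d)^[n] ((sig d)^[m] b) ≠ (sig d)^[m] b) →
      ∀ E : LamEq d, ¬ E.IsEdge a b ∧ ¬ E.IsEdge b a) :=
  improper_chord_not_a_leaf_general d n
end
end

section
/- Let d ≥ 2 and let U' ⊂ ℝ/ℤ be a closed set whose convex hull is a stand-alone σ_d-invariant gap such that σ_d restricted to U' is injective and preserves the cyclic order (degree one on the boundary). Then all σ_d-periodic points contained in U' have the same period. -/
noncomputable section

def theta (u : S1) : ℝ := (AddCircle.equivIco 1 0 u : ℝ)

theorem theta_coe (u : S1) : ((theta u : ℝ) : S1) = u := by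
  have h := (AddCircle.equivIco 1 0).symm_apply_apply u
  rw [AddCircle.equivIco, QuotientAddGroup.equivIcoMod_symm_apply] at h
  exact h

theorem theta_mem (u : S1) : 0 ≤ theta u ∧ theta u < 1 := by
  have h := (AddCircle.equivIco 1 0 u).2
  simp only [Set.mem_Ico, zero_add] at h
  exact h

theorem theta_eq {u : S1} {t : ℝ} (h0 : 0 ≤ t) (h1 : t < 1) (h : (t : S1) = u) : theta u = t := by
  have key : (AddCircle.equivIco 1 0).symm ⟨t, by simp [h0, h1]⟩ = u := by
    rw [AddCircle.equivIco, QuotientAddGroup.equivIcoMod_symm_apply]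
    exact h
  have : AddCircle.equivIco 1 0 u = ⟨t, by simp [h0, h1]⟩ := by
    rw [← key]; exact (AddCircle.equivIco 1 0).apply_symm_apply _
  simp [theta, this]

theorem theta_inj : Function.Injective theta := by
  intro u v h
  rw [← theta_coe u, ← theta_coe v, h]

theorem theta_zero : theta 0 = 0 := theta_eq le_rfl one_pos (by simp)

theorem theta_pos {u : S1} (h : u ≠ 0) : 0 < theta u := by
  rcases (theta_mem u).1.eq_or_lt with h0 | h0
  · exact absurd (theta_inj (by rw [theta_zero, ← h0])) h
  · exact h0

/-- The "coordinate" of `t` as seen from base point `p`. -/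
def rho (p t : S1) : ℝ := theta (t - p)

theorem rho_injOn (p : S1) : Function.Injective (rho p) := by
  intro u v h
  have := theta_inj h
  exact sub_left_injective this

theorem rho_self (p : S1) : rho p p = 0 := by simp [rho, theta_zero]

theorem rho_nonneg (p t : S1) : 0 ≤ rho p t := (theta_mem _).1

theorem rho_pos {p t : S1} (h : t ≠ p) : 0 < rho p t := theta_pos (sub_ne_zero.mpr h)

theorem rho_lt_one (p t : S1) : rho p t < 1 := (theta_mem _).2

theorem coe_rho (p t : S1) : ((rho p t : ℝ) : S1) = t - p := theta_coe _

theorem strictArc_iff (a b c : S1) :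
    StrictArc a b c ↔ 0 < rho a b ∧ rho a b < rho a c := by
  constructor
  · rintro ⟨x, y, z, hx, hy, hz, hxy, hyz, hzx⟩
    have hb : rho a b = y - x := theta_eq (by linarith) (by linarith)
      (by rw [← hx, ← hy, ← AddCircle.coe_sub])
    have hc : rho a c = z - x := theta_eq (by linarith) (by linarith)
      (by rw [← hx, ← hz, ← AddCircle.coe_sub])
    rw [hb, hc]
    constructor <;> linarith
  · rintro ⟨h1, h2⟩
    refine ⟨theta a, theta a + rho a b, theta a + rho a c, theta_coe a, ?_, ?_, by linarith,
      by linarith, by linarith [rho_lt_one a c]⟩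
    · rw [AddCircle.coe_add, theta_coe, coe_rho]
      abel
    · rw [AddCircle.coe_add, theta_coe, coe_rho]
      abel

/-- Key combinatorial lemma: an injective, cyclic-order-preserving self-map of a finite
subset of the circle that fixes one point fixes all points. -/
theorem fix_of_fix (A : Finset S1) (f : S1 → S1)
    (hmap : ∀ a ∈ A, f a ∈ A) (hinj : Set.InjOn f A)
    (hord : ∀ a b c, a ∈ A → b ∈ A → c ∈ A → StrictArc a b c → StrictArc (f a) (f b) (f c))
    (a b : S1) (ha : a ∈ A) (hb : b ∈ A) (hfa : f a = a) : f b = b := by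
  -- f is a bijection of A
  have himg : A.image f = A := by
    apply Finset.eq_of_subset_of_card_le
    · intro s hs
      rcases Finset.mem_image.mp hs with ⟨t, ht, rfl⟩
      exact hmap t ht
    · rw [Finset.card_image_of_injOn hinj]
  have hsurj : ∀ s ∈ A, ∃ t ∈ A, f t = s := by
    intro s hs
    rw [← himg] at hs
    rcases Finset.mem_image.mp hs with ⟨t, ht, hts⟩
    exact ⟨t, ht, hts⟩
  -- order preservation in rho coordinates
  have hpres : ∀ p q r, p ∈ A → q ∈ A → r ∈ A → rho p q < rho p r →
      rho (f p) (f q) < rho (f p) (f r) := by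
    intro p q r hp hq hr hlt
    by_cases hqp : q = p
    · subst hqp
      rw [rho_self] at hlt ⊢
      have : r ≠ q := fun h => by rw [h, rho_self] at hlt; exact lt_irrefl _ hlt
      exact rho_pos (fun h => this (hinj hr hq h))
    · have harc : StrictArc p q r := (strictArc_iff p q r).mpr ⟨rho_pos hqp, hlt⟩
      exact ((strictArc_iff _ _ _).mp (hord p q r hp hq hr harc)).2
  -- rank function
  set rk : S1 → S1 → ℕ := fun p q => (A.filter (fun t => rho p t < rho p q)).card with hrk
  have hrank : ∀ p q, p ∈ A → q ∈ A → rk (f p) (f q) = rk p q := by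
    intro p q hp hq
    have hset : A.filter (fun s => rho (f p) s < rho (f p) (f q)) =
        (A.filter (fun t => rho p t < rho p q)).image f := by
      apply Finset.Subset.antisymm
      · intro s hs
        rcases Finset.mem_filter.mp hs with ⟨hsA, hslt⟩
        rcases hsurj s hsA with ⟨t, htA, rfl⟩
        refine Finset.mem_image.mpr ⟨t, Finset.mem_filter.mpr ⟨htA, ?_⟩, rfl⟩
        rcases lt_trichotomy (rho p t) (rho p q) with h | h | h
        · exact h
        · exact absurd (congrArg (fun u => rho (f p) (f u)) (rho_injOn p h))
            (ne_of_lt hslt)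
        · exact absurd (hpres p q t hp hq htA h) (not_lt.mpr hslt.le)
      · intro s hs
        rcases Finset.mem_image.mp hs with ⟨t, ht, rfl⟩
        rcases Finset.mem_filter.mp ht with ⟨htA, hlt⟩
        exact Finset.mem_filter.mpr ⟨hmap t htA, hpres p t q hp htA hq hlt⟩
    rw [hrk]
    simp only
    rw [hset]
    exact Finset.card_image_of_injOn (hinj.mono (by intro t ht; exact (Finset.mem_filter.mp ht).1))
  -- rank is injective
  have hrkinj : ∀ p q r, q ∈ A → r ∈ A → rk p q = rk p r → q = r := by
    intro p q r hq hr heq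
    by_contra hne
    have hne' : rho p q ≠ rho p r := fun h => hne (rho_injOn p h)
    wlog hlt : rho p q < rho p r generalizing q r
    · exact this r q hr hq heq.symm (Ne.symm hne) (Ne.symm hne')
        (hne'.lt_or_gt.resolve_left hlt)
    have hsub : A.filter (fun t => rho p t < rho p q) ⊂ A.filter (fun t => rho p t < rho p r) := by
      constructor
      · intro t ht
        rcases Finset.mem_filter.mp ht with ⟨htA, h⟩
        exact Finset.mem_filter.mpr ⟨htA, h.trans hlt⟩
      · intro hcon
        have hqmem : q ∈ A.filter (fun t => rho p t < rho p r) :=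
          Finset.mem_filter.mpr ⟨hq, hlt⟩
        have := Finset.mem_filter.mp (hcon hqmem)
        exact lt_irrefl _ this.2
    exact absurd heq (ne_of_lt (Finset.card_lt_card hsub))
  -- conclude
  have h1 : rk a (f b) = rk a b := by
    have := hrank a b ha hb
    rwa [hfa] at this
  exact hrkinj a (f b) b (hmap b hb) hb h1


theorem iterate_ord (d : ℕ) (U' : Set S1) (hmaps : Set.MapsTo (sig d) U' U')
    (hord : ∀ x y z, x ∈ U' → y ∈ U' → z ∈ U' → StrictArc x y z →
      StrictArc (sig d x) (sig d y) (sig d z)) (k : ℕ) :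
    ∀ x y z, x ∈ U' → y ∈ U' → z ∈ U' → StrictArc x y z →
      StrictArc ((sig d)^[k] x) ((sig d)^[k] y) ((sig d)^[k] z) := by
  induction k with
  | zero => intro x y z _ _ _ h; simpa using h
  | succ k ih =>
    intro x y z hx hy hz h
    simp only [Function.iterate_succ', Function.comp_apply]
    exact hord _ _ _ (hmaps.iterate k hx) (hmaps.iterate k hy) (hmaps.iterate k hz)
      (ih x y z hx hy hz h)


/-- If `U'` is a closed σ_d-invariant subset of the circle whose convex hull
is a stand-alone invariant gap of degree one — σ_d restricted to `U'` is injective and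
preserves the cyclic order — then all σ_d-periodic points of `U'` have the same period. -/
theorem degree_one_gap_periods_equal (d : ℕ) (hd : 2 ≤ d) (U' : Set S1)
    (hclosed : IsClosed U') (hinv : sig d '' U' = U')
    (hinj : Set.InjOn (sig d) U')
    (hord : ∀ x y z, x ∈ U' → y ∈ U' → z ∈ U' → StrictArc x y z →
      StrictArc (sig d x) (sig d y) (sig d z))
    (x y : S1) (hx : x ∈ U') (hy : y ∈ U')
    (hpx : ∃ n, 0 < n ∧ (sig d)^[n] x = x) (hpy : ∃ n, 0 < n ∧ (sig d)^[n] y = y) :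
    Function.minimalPeriod (sig d) x = Function.minimalPeriod (sig d) y := by
  have hmaps : Set.MapsTo (sig d) U' U' := by
    intro a ha
    rw [← hinv]
    exact ⟨a, ha, rfl⟩
  set m := Function.minimalPeriod (sig d) x with hmdef
  set n := Function.minimalPeriod (sig d) y with hndef
  obtain ⟨mx, hmx, hmx'⟩ := hpx
  obtain ⟨ny, hny, hny'⟩ := hpy
  have hm : 0 < m := Function.IsPeriodicPt.minimalPeriod_pos hmx hmx'
  have hn : 0 < n := Function.IsPeriodicPt.minimalPeriod_pos hny hny'
  -- the finite invariant set: union of the two orbits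
  set A : Finset S1 :=
    (Finset.range m).image (fun i => (sig d)^[i] x) ∪
    (Finset.range n).image (fun i => (sig d)^[i] y) with hAdef
  have hAU : (A : Set S1) ⊆ U' := by
    intro a haA
    simp only [hAdef, Finset.coe_union, Set.mem_union, Finset.coe_image, Set.mem_image,
      Finset.coe_range, Set.mem_Iio] at haA
    rcases haA with ⟨i, _, rfl⟩ | ⟨i, _, rfl⟩
    · exact hmaps.iterate i hx
    · exact hmaps.iterate i hy
  have hxA : x ∈ A := by
    simp only [hAdef, Finset.mem_union, Finset.mem_image, Finset.mem_range]
    exact Or.inl ⟨0, hm, rfl⟩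
  have hyA : y ∈ A := by
    simp only [hAdef, Finset.mem_union, Finset.mem_image, Finset.mem_range]
    exact Or.inr ⟨0, hn, rfl⟩
  have hAmap : ∀ a ∈ A, sig d a ∈ A := by
    intro a haA
    simp only [hAdef, Finset.mem_union, Finset.mem_image, Finset.mem_range] at haA ⊢
    rcases haA with ⟨i, hi, rfl⟩ | ⟨i, hi, rfl⟩
    · left
      rcases eq_or_lt_of_le (Nat.succ_le_of_lt hi) with h | h
      · refine ⟨0, hm, ?_⟩
        simp only [Function.iterate_zero, id_eq]
        rw [← Function.iterate_succ_apply' (sig d) i x, show i.succ = m from h,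
          Function.iterate_minimalPeriod]
      · exact ⟨i + 1, h, Function.iterate_succ_apply' (sig d) i x⟩
    · right
      rcases eq_or_lt_of_le (Nat.succ_le_of_lt hi) with h | h
      · refine ⟨0, hn, ?_⟩
        simp only [Function.iterate_zero, id_eq]
        rw [← Function.iterate_succ_apply' (sig d) i y, show i.succ = n from h,
          Function.iterate_minimalPeriod]
      · exact ⟨i + 1, h, Function.iterate_succ_apply' (sig d) i y⟩
  have hAmapIter : ∀ k, ∀ a ∈ A, (sig d)^[k] a ∈ A := by
    intro k
    induction k with
    | zero => intro a ha; simpa using ha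
    | succ k ih =>
      intro a ha
      rw [Function.iterate_succ', Function.comp_apply]
      exact hAmap _ (ih a ha)
  have key : ∀ k a b, a ∈ A → b ∈ A → (sig d)^[k] a = a → (sig d)^[k] b = b := by
    intro k a b ha hb hfa
    exact fix_of_fix A ((sig d)^[k]) (hAmapIter k) ((hinj.iterate hmaps k).mono hAU)
      (fun u v w hu hv hw harc =>
        iterate_ord d U' hmaps hord k u v w (hAU hu) (hAU hv) (hAU hw) harc)
      a b ha hb hfa
  have h1 : (sig d)^[n] x = x := key n y x hyA hxA Function.iterate_minimalPeriod
  have h2 : (sig d)^[m] y = y := key m x y hxA hyA Function.iterate_minimalPeriod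
  exact Nat.dvd_antisymm (Function.IsPeriodicPt.minimalPeriod_dvd h1)
    (Function.IsPeriodicPt.minimalPeriod_dvd h2)
end
end

section
/- Let d ≥ 2 and let U be a stand-alone σ_d-periodic gap (convex hull of a closed set U' ⊂ circle with σ_d^n(U') = U' for some n, with positively oriented monotone-covering boundary dynamics along the orbit, and images having pairwise disjoint interiors). Then every edge of U is either (pre)periodic (some forward image is a periodic chord) or (pre)critical (some forward image is a critical chord, i.e., degenerates to a point). -/
noncomputable section

/-- `(x, y)` is a hole of the closed set `A`: both endpoints lie in `A` and the open
positively oriented arc from `x` to `y` misses `A`.  The chord `{x, y}` is then an edge of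
the convex hull of `A`. -/
def IsHole (A : Set S1) (x y : S1) : Prop :=
  x ∈ A ∧ y ∈ A ∧ x ≠ y ∧ ∀ z ∈ A, ¬ StrictArc x z y

/-- σ_d restricted to `A` is positively oriented: every hole of `A` is collapsed to a point
or sent to a hole of the image set. -/
def PosOriented (d : ℕ) (A : Set S1) : Prop :=
  ∀ x y, IsHole A x y →
    sig d x = sig d y ∨ IsHole (sig d '' A) (sig d x) (sig d y)


/-! If no image of the edge degenerates, every image is again a hole of a set in the periodic
orbit of `U'`. An arc shorter than `1 / d` has its length multiplied by `d`, so infinitely often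
the image of the edge has length at least `1 / d`. Two such holes of the same set whose left
endpoints lie within `1 / d` of each other coincide, since otherwise one endpoint would lie
inside the other hole; pigeonhole on the time modulo `n` and on the interval
`[k / d, (k + 1) / d)` containing the left endpoint yields a repetition. -/

namespace S1

def rep (u : S1) : ℝ := AddCircle.equivIco 1 0 u

lemma coe_rep (u : S1) : (rep u : S1) = u :=
  (AddCircle.equivIco 1 0).symm_apply_apply u

lemma rep_mem_Ico (u : S1) : rep u ∈ Set.Ico (0 : ℝ) 1 := by
  simpa [rep] using (AddCircle.equivIco 1 0 u).2

lemma rep_coe (r : ℝ) : rep r = Int.fract r := by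
  simp [rep]

lemma coe_rep_sub_rep (u v : S1) : ((rep v - rep u : ℝ) : S1) = v - u := by
  rw [QuotientAddGroup.mk_sub, coe_rep, coe_rep]

lemma rep_injective : Function.Injective rep := fun u v h => by
  rw [← coe_rep u, ← coe_rep v, h]

def arcLen (x y : S1) : ℝ := rep (y - x)

lemma add_arcLen (x y : S1) : x + (arcLen x y : S1) = y := by
  rw [arcLen, coe_rep, add_sub_cancel]

lemma arcLen_nonneg (x y : S1) : 0 ≤ arcLen x y := (rep_mem_Ico _).1

lemma arcLen_lt_one (x y : S1) : arcLen x y < 1 := (rep_mem_Ico _).2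

lemma arcLen_pos {x y : S1} (h : x ≠ y) : 0 < arcLen x y := by
  refine (arcLen_nonneg x y).lt_of_ne fun h0 => h ?_
  rw [← add_arcLen x y, ← h0, QuotientAddGroup.mk_zero, add_zero]

lemma arcLen_sig {d : ℕ} {x y : S1} (h : d * arcLen x y < 1) :
    arcLen (sig d x) (sig d y) = d * arcLen x y := by
  have hsub : sig d y - sig d x = ((d * arcLen x y : ℝ) : S1) := by
    rw [sig, sig, ← smul_sub, ← nsmul_eq_mul, AddCircle.coe_nsmul, arcLen, coe_rep]
  rw [arcLen, hsub, rep_coe, Int.fract_eq_self]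
  exact ⟨mul_nonneg d.cast_nonneg (arcLen_nonneg x y), h⟩

lemma strictArc_add_add (x : S1) {s t : ℝ} (hs : 0 < s) (hst : s < t) (ht : t < 1) :
    StrictArc x (x + s) (x + t) := by
  induction x using QuotientAddGroup.induction_on with
  | H r => exact ⟨r, r + s, r + t, rfl, rfl, rfl, by linarith, by linarith, by linarith⟩

end S1

open S1

namespace IsHole

variable {A : Set S1} {x y : S1}

lemma right_unique {y' : S1} (h : IsHole A x y) (h' : IsHole A x y') : y = y' := by
  wlog hle : arcLen x y ≤ arcLen x y' generalizing y y'
  · exact (this h' h (le_of_not_ge hle)).symm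
  rcases hle.eq_or_lt with heq | hlt
  · rw [← add_arcLen x y, heq, add_arcLen]
  · have harc := strictArc_add_add x (arcLen_pos h.2.2.1) hlt (arcLen_lt_one x y')
    rw [add_arcLen, add_arcLen] at harc
    exact absurd harc (h'.2.2.2 y h.2.1)

lemma left_eq {x' y' : S1} (h : IsHole A x y) (h' : IsHole A x' y')
    (hlt : |rep x - rep x'| < arcLen x y) (hlt' : |rep x - rep x'| < arcLen x' y') : x = x' := by
  wlog hle : rep x ≤ rep x' generalizing x y x' y'
  · exact (this h' h (abs_sub_comm (rep x) _ ▸ hlt') (abs_sub_comm (rep x) _ ▸ hlt)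
      (le_of_not_ge hle)).symm
  rcases hle.eq_or_lt with heq | hrep
  · exact rep_injective heq
  · rw [abs_sub_comm, abs_of_pos (sub_pos.mpr hrep)] at hlt
    have harc := strictArc_add_add x (sub_pos.mpr hrep) hlt (arcLen_lt_one x y)
    rw [add_arcLen, coe_rep_sub_rep, add_sub_cancel] at harc
    exact absurd harc (h.2.2.2 x' h'.1)

end IsHole

lemma abs_sub_lt_inv_of_floor_mul_eq {c a b : ℝ} (hc : 0 < c) (h : ⌊c * a⌋ = ⌊c * b⌋) :
    |a - b| < c⁻¹ := by
  have h1 := Int.abs_sub_lt_one_of_floor_eq_floor h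
  rw [← mul_sub, abs_mul, abs_of_pos hc] at h1
  rwa [← mul_one c⁻¹, lt_inv_mul_iff₀ hc]

section Orbit

variable {d : ℕ} {x y : S1}

lemma frequently_inv_le_arcLen_iterate (hd : 1 < d) (hne : ∀ i, (sig d)^[i] x ≠ (sig d)^[i] y) :
    ∃ᶠ i in Filter.atTop, (d : ℝ)⁻¹ ≤ arcLen ((sig d)^[i] x) ((sig d)^[i] y) := by
  set ℓ : ℕ → ℝ := fun i => arcLen ((sig d)^[i] x) ((sig d)^[i] y)
  have hd' : (1 : ℝ) < d := by exact_mod_cast hd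
  rw [Filter.frequently_atTop]
  by_contra! hshort
  obtain ⟨M, hM⟩ := hshort
  have hdpos : (0 : ℝ) < d := by positivity
  have hgeom : ∀ j, ℓ (M + j) = d ^ j * ℓ M := by
    intro j
    induction j with
    | zero => simp
    | succ j ih =>
      have hstep : d * ℓ (M + j) < 1 :=
        (lt_inv_mul_iff₀ hdpos).mp (by simpa using hM (M + j) (Nat.le_add_right M j))
      simp only [ℓ, ← add_assoc, Function.iterate_succ_apply'] at hstep ih ⊢
      rw [arcLen_sig hstep, ih, pow_succ]
      ring
  have hpos : 0 < ℓ M := arcLen_pos (hne M)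
  obtain ⟨j, hj⟩ := pow_unbounded_of_one_lt (ℓ M)⁻¹ hd'
  have hlong : 1 < ℓ (M + j) := by
    rw [hgeom, ← inv_mul_cancel₀ hpos.ne']
    exact mul_lt_mul_of_pos_right hj hpos
  exact (arcLen_lt_one _ _).not_gt hlong

lemma isHole_iterate {U : Set S1} (hpos : ∀ i, PosOriented d ((sig d)^[i] '' U))
    (hxy : IsHole U x y) (hne : ∀ i, (sig d)^[i] x ≠ (sig d)^[i] y) (i : ℕ) :
    IsHole ((sig d)^[i] '' U) ((sig d)^[i] x) ((sig d)^[i] y) := by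
  induction i with
  | zero => simpa using hxy
  | succ i ih =>
    rw [Function.iterate_succ_apply', Function.iterate_succ_apply', Function.iterate_succ',
      Set.image_comp]
    refine (hpos i _ _ ih).resolve_left ?_
    simpa only [Function.iterate_succ_apply'] using hne (i + 1)

lemma exists_lt_iterate_eq_of_isHole_iterate {n : ℕ} {U : Set S1} (hd : 1 < d) (hn : 0 < n)
    (hinv : (sig d)^[n] '' U = U)
    (hhole : ∀ i, IsHole ((sig d)^[i] '' U) ((sig d)^[i] x) ((sig d)^[i] y)) :
    ∃ m m', m < m' ∧ (sig d)^[m'] x = (sig d)^[m] x ∧ (sig d)^[m'] y = (sig d)^[m] y := by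
  have hper : Function.IsPeriodicPt (Set.image (sig d)) n U := by
    rw [Function.IsPeriodicPt, Function.IsFixedPt, ← Set.image_iterate_eq]
    exact hinv
  have hdpos : (0 : ℝ) < d := by positivity
  set cell : ℕ → ℕ × ℤ := fun i => (i % n, ⌊d * rep ((sig d)^[i] x)⌋)
  have hmaps : Set.MapsTo cell {i | (d : ℝ)⁻¹ ≤ arcLen ((sig d)^[i] x) ((sig d)^[i] y)}
      (Finset.range n ×ˢ Finset.Ico 0 (d : ℤ) : Finset (ℕ × ℤ)) := by
    intro i _
    have hrep := rep_mem_Ico ((sig d)^[i] x)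
    simp only [cell, Finset.coe_product, Finset.coe_range, Finset.coe_Ico, Set.mem_prod,
      Set.mem_Iio, Set.mem_Ico, Int.floor_nonneg, Int.floor_lt, Int.cast_natCast]
    exact ⟨Nat.mod_lt i hn, mul_nonneg hdpos.le hrep.1, by nlinarith [hrep.2]⟩
  obtain ⟨i, hi, j, hj, hij, hcell⟩ :=
    (Nat.frequently_atTop_iff_infinite.mp (frequently_inv_le_arcLen_iterate hd
      fun i => (hhole i).2.2.1)).exists_ne_map_eq_of_mapsTo hmaps (Finset.finite_toSet _)
  wlog hlt : i < j generalizing i j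
  · exact this j hj i hi hij.symm hcell.symm (hij.symm.lt_of_le (not_lt.mp hlt))
  have hA : (sig d)^[j] '' U = (sig d)^[i] '' U := by
    have hmod : i % n = j % n := congrArg Prod.fst hcell
    rw [Set.image_iterate_eq, Set.image_iterate_eq, ← hper.iterate_mod_apply, ← hmod,
      hper.iterate_mod_apply]
  have hclose := abs_sub_lt_inv_of_floor_mul_eq hdpos (congrArg Prod.snd hcell)
  have hholej := hhole j
  rw [hA] at hholej
  have hx : (sig d)^[j] x = (sig d)^[i] x :=
    ((hhole i).left_eq hholej (hclose.trans_le hi) (hclose.trans_le hj)).symm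
  rw [hx] at hholej
  exact ⟨i, j, hlt, hx, hholej.right_unique (hhole i)⟩

end Orbit

theorem gap_edges_preperiodic_or_precritical_general (d n : ℕ) (hd : 2 ≤ d) (hn : 0 < n)
    (U' : Set S1)
    (hinv : (sig d)^[n] '' U' = U')
    (hpos : ∀ i : ℕ, PosOriented d ((sig d)^[i] '' U'))
    (x y : S1) (hxy : IsHole U' x y) :
    ∃ m : ℕ, (sig d)^[m] x = (sig d)^[m] y ∨
      ∃ k : ℕ, 1 ≤ k ∧
        ({(sig d)^[m + k] x, (sig d)^[m + k] y} : Set S1) =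
          {(sig d)^[m] x, (sig d)^[m] y} := by
  by_cases hcrit : ∃ m, (sig d)^[m] x = (sig d)^[m] y
  · obtain ⟨m, hm⟩ := hcrit
    exact ⟨m, Or.inl hm⟩
  push Not at hcrit
  obtain ⟨m, m', hlt, hx, hy⟩ :=
    exists_lt_iterate_eq_of_isHole_iterate hd hn hinv (isHole_iterate hpos hxy hcrit)
  refine ⟨m, Or.inr ⟨m' - m, by omega, ?_⟩⟩
  rw [Nat.add_sub_cancel' hlt.le, hx, hy]

/-- Let `U'` be a closed circle set generating a stand-alone `n`-periodic
gap: `σ_d^n(U') = U'`, the boundary dynamics along the orbit is positively oriented, and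
the convex hulls of the sets in the orbit have pairwise disjoint interiors.  Then every
edge (hole) `{x, y}` of the gap is (pre)critical (some forward image degenerates to a
point) or (pre)periodic (some forward image is a periodic chord). -/
theorem gap_edges_preperiodic_or_precritical (d n : ℕ) (hd : 2 ≤ d) (hn : 0 < n)
    (U' : Set S1) (hclosed : IsClosed U') (hne : U'.Nonempty)
    (hinv : (sig d)^[n] '' U' = U')
    (hpos : ∀ i : ℕ, PosOriented d ((sig d)^[i] '' U'))
    (hdisjint : ∀ i j : ℕ, i < n → j < n → i ≠ j →
      Disjoint (interior (convexHull ℝ (toC '' ((sig d)^[i] '' U'))))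
        (interior (convexHull ℝ (toC '' ((sig d)^[j] '' U')))))
    (x y : S1) (hxy : IsHole U' x y) :
    ∃ m : ℕ, (sig d)^[m] x = (sig d)^[m] y ∨
      ∃ k : ℕ, 1 ≤ k ∧
        ({(sig d)^[m + k] x, (sig d)^[m + k] y} : Set S1) =
          {(sig d)^[m] x, (sig d)^[m] y} :=
  gap_edges_preperiodic_or_precritical_general d n hd hn U' hinv hpos x y hxy
end
end

section
/- Let d ≥ 2 and let ∼ be a σ_d-invariant laminational equivalence relation. Then the associated q-lamination Λ_∼ (edges of convex hulls of ∼-classes, plus all circle points) is proper: no leaf of Λ_∼ is a critical chord with a periodic endpoint, and no two leaves of Λ_∼ sharing a common endpoint v with equal σ_d-images have v periodic. -/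
noncomputable section

lemma LamEq.r_sig_s18 {d : ℕ} (E : LamEq d) {x y : S1} (h : E.r x y) :
    E.r (sig d x) (sig d y) := by
  have := E.forward x
  have : sig d y ∈ {z | E.r (sig d x) z} := by
    rw [← this]; exact ⟨y, h, rfl⟩
  exact this

lemma LamEq.image_iterate {d : ℕ} (E : LamEq d) (x : S1) (n : ℕ) :
    (sig d)^[n] '' {y | E.r x y} = {z | E.r ((sig d)^[n] x) z} := by
  induction n with
  | zero => simp
  | succ m ih =>
    rw [Function.iterate_succ', Set.image_comp, ih]
    exact E.forward _

lemma LamEq.injOn_iterate {d : ℕ} (E : LamEq d) {x : S1} {n : ℕ}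
    (hx : (sig d)^[n] x = x) :
    Set.InjOn (sig d)^[n] {y | E.r x y} := by
  have him : (sig d)^[n] '' {y | E.r x y} = {y | E.r x y} := by
    rw [E.image_iterate, hx]
  have hmt : Set.MapsTo (sig d)^[n] {y | E.r x y} {y | E.r x y} := by
    exact fun y hy => him ▸ Set.mem_image_of_mem _ hy
  have := ((E.finite x).surjOn_iff_bijOn_of_mapsTo hmt).mp him.ge
  exact this.injOn

/-- The q-lamination of a σ_d-invariant laminational equivalence relation is
proper: no leaf (edge of a class) is a critical chord with a periodic endpoint, and no
critical wedge (two distinct leaves with a common endpoint `v` and equal images) has a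
periodic vertex `v`. -/
theorem q_lamination_is_proper (d : ℕ) (hd : 2 ≤ d) (E : LamEq d) :
    (∀ x y : S1, E.IsEdge x y → sig d x = sig d y →
      ¬ ∃ n : ℕ, 0 < n ∧ (sig d)^[n] x = x) ∧
    (∀ v a b : S1, E.IsEdge v a → E.IsEdge v b → a ≠ b → sig d a = sig d b →
      ¬ ∃ n : ℕ, 0 < n ∧ (sig d)^[n] v = v) := by
  constructor
  · rintro x y ⟨hr, hxy, -⟩ hs ⟨n, hn, hper⟩
    obtain ⟨m, rfl⟩ := Nat.exists_eq_succ_of_ne_zero hn.ne'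
    have hinj := E.injOn_iterate hper
    have heq : (sig d)^[m+1] x = (sig d)^[m+1] y := by
      rw [Function.iterate_succ_apply, Function.iterate_succ_apply, hs]
    exact hxy (hinj (E.refl x) hr heq)
  · rintro v a b ⟨hra, -, -⟩ ⟨hrb, -, -⟩ hab hs ⟨n, hn, hper⟩
    obtain ⟨m, rfl⟩ := Nat.exists_eq_succ_of_ne_zero hn.ne'
    have hinj := E.injOn_iterate hper
    have heq : (sig d)^[m+1] a = (sig d)^[m+1] b := by
      rw [Function.iterate_succ_apply, Function.iterate_succ_apply, hs]
    exact hab (hinj hra hrb heq)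
end
end
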